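/- arXiv:2204.13332 — 9 statements merged into one kernel-verified Lean document; each statement's English description precedes it below -/
import Mathlib

section
/- Let R be a ring and let I be a two-sided ideal of R all of whose elements are nilpotent, such that the quotient ring R/I is semiprime and indecomposable. Then R is strongly indecomposable: every idempotent e of R satisfying (1−e)·r·e = 0 for all r ∈ R is equal to 0 or to 1. -/
/-!
Modulo the nil ideal `I`, a semicentral idempotent `e` stays semicentral. In the semiprime
quotient the elements `x` with `x e = 0 = (1 - e) x` form an ideal of square zero, so it
vanishes; as it contains every `e r (1 - e)`, the image of `e` is central, hence `0` or `1`.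
Commuting idempotents that agree modulo a nil ideal are equal, so `e` itself is `0` or `1`.
-/

section

variable {R S : Type*} [Ring R] [Ring S]

theorem mul_eq_self_of_one_sub_mul_eq_zero {e y : R} (h : (1 - e) * y = 0) : e * y = y := by
  rwa [sub_mul, one_mul, sub_eq_zero, eq_comm] at h

def IsSemicentralIdempotent (e : R) : Prop :=
  IsIdempotentElem e ∧ ∀ r, (1 - e) * r * e = 0

namespace IsSemicentralIdempotent

variable {e : R}

theorem mul_eq_mul_mul (h : IsSemicentralIdempotent e) (r : R) : r * e = e * r * e := by
  simpa only [sub_mul, one_mul, sub_eq_zero] using h.2 r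

theorem map (h : IsSemicentralIdempotent e) (f : R →+* S) (hf : Function.Surjective f) :
    IsSemicentralIdempotent (f e) := by
  refine ⟨h.1.map f, fun s => ?_⟩
  obtain ⟨r, rfl⟩ := hf s
  rw [← map_one f, ← map_sub, ← map_mul, ← map_mul, h.2 r, map_zero]

/-- The Peirce corner `e R (1 - e)`: its elements are the `x` with `x = e * x * (1 - e)`. -/
def offDiagonalIdeal (h : IsSemicentralIdempotent e) : TwoSidedIdeal R :=
  TwoSidedIdeal.mk' {x | x * e = 0 ∧ (1 - e) * x = 0}
    ⟨zero_mul e, mul_zero _⟩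
    (fun ⟨hx, hx'⟩ ⟨hy, hy'⟩ =>
      ⟨by rw [add_mul, hx, hy, add_zero], by rw [mul_add, hx', hy', add_zero]⟩)
    (fun ⟨hx, hx'⟩ => ⟨by rw [neg_mul, hx, neg_zero], by rw [mul_neg, hx', neg_zero]⟩)
    (fun {a x} ⟨hx, hx'⟩ =>
      ⟨by rw [mul_assoc, hx, mul_zero],
        by rw [← mul_eq_self_of_one_sub_mul_eq_zero hx', ← mul_assoc, ← mul_assoc, h.2 a,
          zero_mul]⟩)
    (fun {x b} ⟨hx, hx'⟩ =>
      ⟨by rw [mul_assoc, h.mul_eq_mul_mul b, ← mul_assoc, ← mul_assoc, hx, zero_mul, zero_mul],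
        by rw [← mul_assoc, hx', zero_mul]⟩)

theorem mem_offDiagonalIdeal (h : IsSemicentralIdempotent e) {x : R} :
    x ∈ h.offDiagonalIdeal ↔ x * e = 0 ∧ (1 - e) * x = 0 :=
  TwoSidedIdeal.mem_mk' _ _ _ _ _ _ _

theorem offDiagonalIdeal_mul_eq_zero (h : IsSemicentralIdempotent e) {x y : R}
    (hx : x ∈ h.offDiagonalIdeal) (hy : y ∈ h.offDiagonalIdeal) : x * y = 0 := by
  rw [mem_offDiagonalIdeal] at hx hy
  rw [← mul_eq_self_of_one_sub_mul_eq_zero hy.2, ← mul_assoc, hx.1, zero_mul]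

theorem mul_mul_one_sub_mem_offDiagonalIdeal (h : IsSemicentralIdempotent e) (r : R) :
    e * r * (1 - e) ∈ h.offDiagonalIdeal := by
  rw [mem_offDiagonalIdeal, mul_assoc, h.1.one_sub_mul_self, mul_zero, ← mul_assoc, ← mul_assoc,
    h.1.one_sub_mul_self, zero_mul, zero_mul]
  exact ⟨rfl, rfl⟩

theorem commute_of_semiprime
    (hR : ∀ J : TwoSidedIdeal R, (∀ x ∈ J, ∀ y ∈ J, x * y = 0) → J = ⊥)
    (h : IsSemicentralIdempotent e) (r : R) : e * r = r * e := by
  have hJ : h.offDiagonalIdeal = ⊥ := hR _ fun _ hx _ hy => h.offDiagonalIdeal_mul_eq_zero hx hy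
  have h0 := h.mul_mul_one_sub_mem_offDiagonalIdeal r
  rw [hJ, TwoSidedIdeal.mem_bot, mul_sub, mul_one, sub_eq_zero] at h0
  rw [h0, h.mul_eq_mul_mul r]

end IsSemicentralIdempotent

theorem IsIdempotentElem.eq_zero_or_one_of_map (f : R →+* S)
    (hf : ∀ x ∈ TwoSidedIdeal.ker f, IsNilpotent x) {e : R} (he : IsIdempotentElem e)
    (hfe : f e = 0 ∨ f e = 1) : e = 0 ∨ e = 1 := by
  have lift {c : R} (hc : IsIdempotentElem c) (hcomm : Commute e c) (hfc : f e = f c) : e = c :=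
    eq_of_isNilpotent_sub_of_isIdempotentElem_of_commute he hc
      (hf _ (by rw [TwoSidedIdeal.mem_ker, map_sub, hfc, sub_self])) hcomm
  rcases hfe with h0 | h1
  · exact .inl (lift .zero (.zero_right e) (by rw [h0, map_zero]))
  · exact .inr (lift .one (.one_right e) (by rw [h1, map_one]))

end

theorem stmt2_general {R : Type*} [Ring R] (I : TwoSidedIdeal R)
    (hnil : ∀ x ∈ I, IsNilpotent x)
    (hsemiprime : ∀ J : TwoSidedIdeal I.ringCon.Quotient,
      (∀ x ∈ J, ∀ y ∈ J, x * y = 0) → J = ⊥)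
    (hindec : ∀ e : I.ringCon.Quotient, e * e = e → (∀ r, e * r = r * e) → e = 0 ∨ e = 1) :
    ∀ e : R, e * e = e → (∀ r : R, (1 - e) * r * e = 0) → e = 0 ∨ e = 1 := by
  intro e he hsc
  have hε : IsSemicentralIdempotent (I.ringCon.mk' e) :=
    IsSemicentralIdempotent.map ⟨he, hsc⟩ _ I.ringCon.mk'_surjective
  refine IsIdempotentElem.eq_zero_or_one_of_map I.ringCon.mk'
    (by rwa [TwoSidedIdeal.ker_ringCon_mk']) he ?_
  exact hindec _ hε.1 (hε.commute_of_semiprime hsemiprime)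

/-- Let `R` be a ring and `I` a two-sided ideal of `R` all of whose elements are nilpotent,
such that the quotient ring `R/I` is semiprime and indecomposable. Then `R` is strongly
indecomposable: every semicentral idempotent of `R` is `0` or `1`. -/
theorem stmt2 {R : Type*} [Ring R] (I : TwoSidedIdeal R)
    (hnil : ∀ x ∈ I, IsNilpotent x)
    (hsemiprime : ∀ J : TwoSidedIdeal I.ringCon.Quotient,
      (∀ x ∈ J, ∀ y ∈ J, x * y = 0) → J = ⊥)
    (hnontrivial : Nontrivial I.ringCon.Quotient)
    (hindec : ∀ e : I.ringCon.Quotient, e * e = e → (∀ r, e * r = r * e) → e = 0 ∨ e = 1) :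
    ∀ e : R, e * e = e → (∀ r : R, (1 - e) * r * e = 0) → e = 0 ∨ e = 1 :=
  stmt2_general I hnil hsemiprime hindec
end

section
/- Let R be a nontrivial ring, n ≥ 2, and let {s_{ijk} | i,j,k ∈ {1,…,n}} be a multiplier system of central elements of R in which every s_{ijk} equals 0 or 1. Then for any pairwise distinct indices i, j, k, exactly one of the following holds for the three elements s_{iji}, s_{jkj}, s_{kik}: (1) all three are equal to 1; (2) exactly two of them are 0 and the third is 1; (3) all three are 0. -/
/-- Let `R` be a nontrivial ring, `n ≥ 2`, and `{s i j k}` a multiplier system of central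
elements of `R` in which every `s i j k` equals `0` or `1`. Then for pairwise distinct
`i, j, k`, exactly one of the following holds for `s i j i`, `s j k j`, `s k i k`:
(1) all three equal `1`; (2) exactly two are `0` and the third is `1`; (3) all three are `0`. -/
theorem stmt3 {R : Type*} [Ring R] [Nontrivial R] (n : ℕ) (hn : 2 ≤ n)
    (s : Fin n → Fin n → Fin n → R)
    (hcentral : ∀ i j k, ∀ r : R, s i j k * r = r * s i j k)
    (hs1 : ∀ i k, s i i k = 1) (hs2 : ∀ i k, s i k k = 1)
    (hs3 : ∀ i j k l, s i j k * s i k l = s i j l * s j k l)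
    (h01 : ∀ i j k, s i j k = 0 ∨ s i j k = 1) :
    ∀ i j k : Fin n, i ≠ j → j ≠ k → i ≠ k →
      letI a := s i j i; letI b := s j k j; letI c := s k i k
      letI P1 := a = 1 ∧ b = 1 ∧ c = 1
      letI P2 := (a = 1 ∧ b = 0 ∧ c = 0) ∨ (a = 0 ∧ b = 1 ∧ c = 0) ∨ (a = 0 ∧ b = 0 ∧ c = 1)
      letI P3 := a = 0 ∧ b = 0 ∧ c = 0
      (P1 ∧ ¬P2 ∧ ¬P3) ∨ (¬P1 ∧ P2 ∧ ¬P3) ∨ (¬P1 ∧ ¬P2 ∧ P3) := by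
  have key : ∀ i j k : Fin n, s i j i = 1 → s j k j = 1 → s k i k = 1 := by
    intro i j k ha hb
    have e3 : s k j k = s j k j := by
      have h := hs3 j k j k
      rw [hs1, hs2, mul_one, one_mul] at h
      exact h.symm
    have e1 : s k i j * s k j i = 1 := by
      have h := hs3 k i j i
      rw [hs2, ha, one_mul] at h
      exact h
    have e2 : s k i j = s k i k * s i j k := by
      have h := hs3 k i j k
      rw [e3, hb, mul_one] at h
      exact h
    have e4 : s k i k * (s i j k * s k j i) = 1 := by
      rw [← mul_assoc, ← e2, e1]
    rcases h01 k i k with h0 | h1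
    · rw [h0, zero_mul] at e4
      exact absurd e4.symm one_ne_zero
    · exact h1
  intro i j k _ _ _
  have k1 := key i j k
  have k2 := key j k i
  have k3 := key k i j
  rcases h01 i j i with ha | ha <;> rcases h01 j k j with hb | hb <;>
      rcases h01 k i k with hc | hc <;>
    first
      | exact absurd (ha.symm.trans (k2 hb hc)) zero_ne_one
      | exact absurd (hb.symm.trans (k3 hc ha)) zero_ne_one
      | exact absurd (hc.symm.trans (k1 ha hb)) zero_ne_one
      | (clear k1 k2 k3; simp [ha, hb, hc, zero_ne_one, one_ne_zero])
end

section
/- Let R be a ring, n ≥ 2, and let {s_{ijk} | i,j,k ∈ {1,…,n}} be a multiplier system of central elements of R in which every s_{ijk} equals 0 or 1. Then the binary relation ∼ on {1,…,n} defined by i ∼ j if and only if s_{iji} = 1 is an equivalence relation (reflexive, symmetric, and transitive). -/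
/-- Let `R` be a ring, `n ≥ 2`, and `{s i j k}` a multiplier system of central elements of `R`
in which every `s i j k` equals `0` or `1`. Then the relation `i ∼ j ↔ s i j i = 1` on
`{1,…,n}` is an equivalence relation. -/
theorem stmt4 {R : Type*} [Ring R] (n : ℕ) (hn : 2 ≤ n)
    (s : Fin n → Fin n → Fin n → R)
    (hcentral : ∀ i j k, ∀ r : R, s i j k * r = r * s i j k)
    (hs1 : ∀ i k, s i i k = 1) (hs2 : ∀ i k, s i k k = 1)
    (hs3 : ∀ i j k l, s i j k * s i k l = s i j l * s j k l)
    (h01 : ∀ i j k, s i j k = 0 ∨ s i j k = 1) :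
    Equivalence (fun i j : Fin n => s i j i = 1) := by
  constructor
  · intro i; exact hs1 i i
  · intro i j h
    have key := hs3 j i j i
    rw [hs1, hs2, one_mul, mul_one] at key
    rw [key, h]
  · intro i j k hij hjk
    have h1 := hs3 i j k j
    rw [hs2, hjk, mul_one] at h1
    have hikj : s i k j = 1 := by
      rcases h01 i k j with h | h
      · rw [h, mul_zero] at h1; rw [h]; exact h1
      · exact h
    have h2 := hs3 i k j i
    rw [hikj, one_mul, hij] at h2
    rcases h01 i k i with h | h
    · rw [h, zero_mul] at h2; rw [h]; exact h2.symm
    · exact h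
end

section
/- Let T be a commutative ring, let R be a T-algebra satisfying condition (4), let n ≥ 1, and let K = T(n,R) be the algebra of upper triangular n×n matrices over R. Then every T-algebra automorphism φ of K is triangular, i.e., φ maps the set of strictly upper triangular matrices in K onto itself. -/
/-- The `T`-subalgebra of upper triangular `n × n` matrices over `R`. -/
def triangularSubalgebra (T R : Type*) [CommRing T] [Ring R] [Algebra T R] (n : ℕ) :
    Subalgebra T (Matrix (Fin n) (Fin n) R) where
  carrier := {A | ∀ ⦃i j : Fin n⦄, j < i → A i j = 0}
  add_mem' := fun {A B} hA hB i j hij => by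
    simp [Matrix.add_apply, hA hij, hB hij]
  mul_mem' := fun {A B} hA hB i j hij => by
    simp only [Matrix.mul_apply]
    refine Finset.sum_eq_zero fun k _ => ?_
    rcases lt_or_ge k i with h | h
    · rw [hA h, zero_mul]
    · rw [hB (lt_of_lt_of_le hij h), mul_zero]
  algebraMap_mem' := fun t i j hij => by
    simp [Matrix.algebraMap_matrix_apply, (ne_of_lt hij).symm]

/-- The set of strictly upper triangular matrices inside the triangular matrix algebra. -/
def strictlyUpper (T R : Type*) [CommRing T] [Ring R] [Algebra T R] (n : ℕ) :
    Set (triangularSubalgebra T R n) :=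
  {A | ∀ i j : Fin n, j ≤ i → (A : Matrix (Fin n) (Fin n) R) i j = 0}

/-- The entrywise action of an automorphism `α` of `R` on the triangular matrix algebra. -/
def entrywiseMap (T R : Type*) [CommRing T] [Ring R] [Algebra T R] (n : ℕ)
    (α : R ≃ₐ[T] R) (A : triangularSubalgebra T R n) : triangularSubalgebra T R n :=
  ⟨Matrix.of fun i j => α ((A : Matrix (Fin n) (Fin n) R) i j),
    fun i j hij => by simp [Matrix.of_apply, A.2 hij]⟩

section Aux

variable {T R : Type*} [CommRing T] [Ring R] [Algebra T R] {n : ℕ}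

local notation "K" => triangularSubalgebra T R n

/-- Diagonal matrices as elements of the triangular subalgebra. -/
def diagK (T R : Type*) [CommRing T] [Ring R] [Algebra T R] (n : ℕ) (d : Fin n → R) :
    triangularSubalgebra T R n :=
  ⟨Matrix.diagonal d, fun i j hij => Matrix.diagonal_apply_ne d (ne_of_lt hij).symm⟩

lemma coe_mulK (A B : K) :
    ((A * B : K) : Matrix (Fin n) (Fin n) R)
      = (A : Matrix (Fin n) (Fin n) R) * (B : Matrix (Fin n) (Fin n) R) := rfl

lemma coe_subK (A B : K) :
    ((A - B : K) : Matrix (Fin n) (Fin n) R)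
      = (A : Matrix (Fin n) (Fin n) R) - (B : Matrix (Fin n) (Fin n) R) := rfl

lemma coe_oneK : ((1 : K) : Matrix (Fin n) (Fin n) R) = 1 := rfl

/-- Diagonal entries are multiplicative on upper triangular matrices. -/
lemma diag_mulK (A B : K) (i : Fin n) :
    ((A * B : K) : Matrix (Fin n) (Fin n) R) i i
      = (A : Matrix (Fin n) (Fin n) R) i i * (B : Matrix (Fin n) (Fin n) R) i i := by
  rw [coe_mulK, Matrix.mul_apply]
  refine Finset.sum_eq_single i (fun k _ hk => ?_) (by simp)
  rcases lt_or_gt_of_ne hk with h | h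
  · rw [A.2 h, zero_mul]
  · rw [B.2 h, mul_zero]

/-- The key idempotent-theoretic lemma: if `e` is an idempotent of `K` with
`e x (1-e) = 0` for all `x`, then (under condition (4)) `(1-e) k e` is strictly upper. -/
lemma mem_strictlyUpper_of_idem
    (hcond4 : ∀ e : R, e * e = e → (∀ r : R, (1 - e) * r * e = 0) →
      ∀ r : R, e * r * (1 - e) = 0)
    (e : K) (he : e * e = e) (hsemi : ∀ x : K, e * x * (1 - e) = 0) (k : K) :
    ((1 - e) * k * e : K) ∈ strictlyUpper T R n := by
  intro i j hij
  rcases lt_or_eq_of_le hij with h | h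
  · exact ((1 - e) * k * e : K).2 h
  subst h
  set ei : R := (e : Matrix (Fin n) (Fin n) R) j j with hei
  have hidem : ei * ei = ei := by
    have := congrArg (fun M : K => (M : Matrix (Fin n) (Fin n) R) j j) he
    simpa [diag_mulK] using this
  have hsc : ∀ r : R, ei * r * (1 - ei) = 0 := by
    intro r
    have := congrArg (fun M : K => (M : Matrix (Fin n) (Fin n) R) j j)
      (hsemi (diagK T R n (fun _ => r)))
    simpa [diag_mulK, coe_subK, coe_oneK, Matrix.sub_apply, Matrix.one_apply_eq,
      diagK, Matrix.diagonal_apply_eq] using this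
  have hsc' : ∀ r : R, (1 - ei) * r * ei = 0 := by
    intro r
    have := hcond4 (1 - ei)
      (by rw [sub_mul, one_mul, mul_sub, mul_one, hidem]; abel) (fun s => by simpa using hsc s) r
    simpa using this
  show (((1 - e) * k * e : K) : Matrix (Fin n) (Fin n) R) j j = 0
  calc (((1 - e) * k * e : K) : Matrix (Fin n) (Fin n) R) j j
      = ((1 - e : K) : Matrix (Fin n) (Fin n) R) j j
        * ((k : K) : Matrix (Fin n) (Fin n) R) j j * ei := by
        rw [diag_mulK, diag_mulK]
    _ = (1 - ei) * ((k : K) : Matrix (Fin n) (Fin n) R) j j * ei := by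
        rw [coe_subK, coe_oneK, Matrix.sub_apply, Matrix.one_apply_eq]
    _ = 0 := hsc' _

/-- The tail idempotent `g k = diag(0,…,0,1,…,1)` (ones from position `k` on). -/
def tailIdem (T R : Type*) [CommRing T] [Ring R] [Algebra T R] (n : ℕ) (k : Fin n) :
    triangularSubalgebra T R n :=
  diagK T R n (fun i => if k ≤ i then 1 else 0)

lemma tailIdem_idem (k : Fin n) : tailIdem T R n k * tailIdem T R n k = tailIdem T R n k := by
  apply Subtype.ext
  rw [coe_mulK]
  show Matrix.diagonal _ * Matrix.diagonal _ = Matrix.diagonal _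
  rw [Matrix.diagonal_mul_diagonal]
  exact congrArg Matrix.diagonal (funext fun i => by by_cases h : k ≤ i <;> simp [h])

lemma tailIdem_semi (k : Fin n) (x : K) :
    tailIdem T R n k * x * (1 - tailIdem T R n k) = 0 := by
  apply Subtype.ext
  rw [coe_mulK, coe_mulK, coe_subK, coe_oneK]
  show (Matrix.diagonal _ : Matrix (Fin n) (Fin n) R) * _ * (1 - Matrix.diagonal _) = 0
  rw [← Matrix.diagonal_one, Matrix.diagonal_sub]
  funext i j
  rw [Matrix.mul_diagonal, Matrix.diagonal_mul]
  by_cases hi : k ≤ i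
  · by_cases hj : k ≤ j
    · simp [hi, hj]
    · have : j < i := lt_of_lt_of_le (lt_of_not_ge hj) hi
      simp [x.2 this]
  · simp [hi]

lemma decomp_entry (A : K) (k : Fin n) (i j : Fin n) :
    (((1 - tailIdem T R n k) * (A * diagK T R n (fun i => if i = k then 1 else 0))
        * tailIdem T R n k : K) : Matrix (Fin n) (Fin n) R) i j
      = (1 - if k ≤ i then (1:R) else 0)
        * ((A : Matrix (Fin n) (Fin n) R) i j * if j = k then 1 else 0)
        * if k ≤ j then 1 else 0 := by
  rw [coe_mulK, coe_mulK, coe_mulK, coe_subK, coe_oneK]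
  show ((1 - Matrix.diagonal (fun i => if k ≤ i then (1:R) else 0))
      * ((A : Matrix (Fin n) (Fin n) R) * Matrix.diagonal (fun i => if i = k then (1:R) else 0))
      * Matrix.diagonal (fun i => if k ≤ i then (1:R) else 0)) i j
      = (1 - if k ≤ i then (1:R) else 0)
        * ((A : Matrix (Fin n) (Fin n) R) i j * if j = k then 1 else 0)
        * if k ≤ j then 1 else 0
  rw [← Matrix.diagonal_one, Matrix.diagonal_sub, Matrix.mul_diagonal, Matrix.diagonal_mul,
    Matrix.mul_diagonal]

/-- Decomposition of a strictly upper matrix into idempotent-framed pieces. -/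
lemma strictlyUpper_decomp (A : K) (hA : A ∈ strictlyUpper T R n) :
    A = ∑ k : Fin n, (1 - tailIdem T R n k)
        * (A * diagK T R n (fun i => if i = k then 1 else 0)) * tailIdem T R n k := by
  apply Subtype.ext
  rw [AddSubmonoidClass.coe_finset_sum]
  funext i j
  rw [Matrix.sum_apply]
  simp only [decomp_entry]
  rw [Finset.sum_eq_single j (fun k _ hk => by simp [Ne.symm hk]) (by simp)]
  by_cases h : j ≤ i
  · simp [h, hA i j h]
  · have : ¬ j ≤ i := h
    simp [h]

/-- Sums of strictly upper matrices are strictly upper. -/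
lemma strictlyUpper_sum {ι : Type*} (s : Finset ι) (f : ι → K)
    (hf : ∀ k ∈ s, f k ∈ strictlyUpper T R n) :
    (∑ k ∈ s, f k) ∈ strictlyUpper T R n := by
  intro i j hij
  rw [AddSubmonoidClass.coe_finset_sum, Matrix.sum_apply]
  exact Finset.sum_eq_zero fun k hk => hf k hk i j hij

/-- Any algebra automorphism maps strictly upper matrices to strictly upper matrices. -/
lemma image_strictlyUpper_subset
    (hcond4 : ∀ e : R, e * e = e → (∀ r : R, (1 - e) * r * e = 0) →
      ∀ r : R, e * r * (1 - e) = 0)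
    (ψ : (triangularSubalgebra T R n) ≃ₐ[T] triangularSubalgebra T R n) :
    ψ '' strictlyUpper T R n ⊆ strictlyUpper T R n := by
  rintro _ ⟨A, hA, rfl⟩
  rw [strictlyUpper_decomp A hA, map_sum]
  refine strictlyUpper_sum _ _ fun k _ => ?_
  rw [map_mul, map_mul, map_sub, map_one]
  refine mem_strictlyUpper_of_idem hcond4 (ψ (tailIdem T R n k)) ?_ ?_ _
  · rw [← map_mul, tailIdem_idem]
  · intro x
    have : x = ψ (ψ.symm x) := (ψ.apply_symm_apply x).symm
    rw [this, ← map_one ψ, ← map_sub, ← map_mul, ← map_mul, tailIdem_semi, map_zero]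

end Aux

/-- Let `R` be a `T`-algebra satisfying condition (4) and `K = T(n,R)` the upper
triangular matrix algebra. Then every `T`-algebra automorphism of `K` maps the set of
strictly upper triangular matrices onto itself. -/
theorem stmt6 (T R : Type*) [CommRing T] [Ring R] [Algebra T R] (n : ℕ) (hn : 1 ≤ n)
    (hcond4 : ∀ e : R, e * e = e → (∀ r : R, (1 - e) * r * e = 0) →
      ∀ r : R, e * r * (1 - e) = 0)
    (φ : triangularSubalgebra T R n ≃ₐ[T] triangularSubalgebra T R n) :
    φ '' strictlyUpper T R n = strictlyUpper T R n := by
  apply Set.Subset.antisymm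
  · exact image_strictlyUpper_subset hcond4 φ
  · intro A hA
    refine ⟨φ.symm A, ?_, φ.apply_symm_apply A⟩
    have := image_strictlyUpper_subset hcond4 φ.symm ⟨A, hA, rfl⟩
    exact this
end

section
/- Let T be a commutative ring, R a T-algebra, n ≥ 1, and K = T(n,R) the algebra of upper triangular n×n matrices over R. Let φ be a T-algebra automorphism of K that maps the set of strictly upper triangular matrices onto itself (a triangular automorphism). Then there exist an invertible element u of K and a T-algebra automorphism α of R such that φ(A) = u · ᾱ(A) · u⁻¹ for all A ∈ K, where ᾱ(A) is the matrix obtained from A by applying α to every entry. In other words, every triangular automorphism of T(n,R) is a product of an inner automorphism and a ring automorphism. -/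
/-!
A triangular automorphism `φ` preserves every power `J ^ k` of the ideal `J` of strictly upper
triangular matrices. Reading off the `(0, k)` entry of `φ (φ⁻¹ (single 0 k 1))` through the
superdiagonal pieces of `φ⁻¹ (single 0 k 1) ∈ J ^ k` shows that `φ (idem k)` has `k`-th diagonal
entry `1` (first at `k = 0`, using `k = n - 1`). Hence `u = ∑ i, φ (idem i) * idem i` is
unipotent, so invertible, and `φ (idem i) = u * idem i * u⁻¹`.

An automorphism `ψ` fixing every `idem i` maps `single i j r` to `single i j (β i j r)`, where
`β = entryMap ψ` satisfies `β i l (r * s) = β i j r * β j l s`. So `α = β 0 0` is an automorphism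
of `R`, the `w i = β 0 i 1` are units, and `β i j r = (w i)⁻¹ * α r * w j`: `ψ` is `ᾱ`
conjugated by a diagonal matrix.
-/

theorem IsIdempotentElem.eq_one_of_mul_eq_one {M : Type*} [Monoid M] {e a : M}
    (he : IsIdempotentElem e) (h : e * a = 1) : e = 1 :=
  calc e = e * (e * a) := by rw [h, mul_one]
    _ = 1 := by rw [← mul_assoc, he.eq, h]

theorem IsIdempotentElem.eq_one_of_mul_eq_one' {M : Type*} [Monoid M] {e a : M}
    (he : IsIdempotentElem e) (h : a * e = 1) : e = 1 :=
  calc e = a * e * e := by rw [h, one_mul]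
    _ = 1 := by rw [mul_assoc, he.eq, h]

namespace triangularSubalgebra

variable {T R : Type*} [CommRing T] [Ring R] [Algebra T R] {n : ℕ}

local notation "𝕋" => triangularSubalgebra T R n

-- Below the diagonal (`j < i`) the entry is replaced by `0`, so that `single` stays triangular.
def single (i j : Fin n) (r : R) : 𝕋 :=
  ⟨Matrix.single i j (if i ≤ j then r else 0), fun a b hab => by
    simp only [Matrix.single_apply]
    split_ifs with h h' <;> first | rfl | (obtain ⟨rfl, rfl⟩ := h; exact absurd h' hab.not_ge)⟩

theorem coe_single_of_le {i j : Fin n} (h : i ≤ j) (r : R) :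
    (single i j r : 𝕋).val = Matrix.single i j r := by
  simp [single, h]

theorem single_of_not_le {i j : Fin n} (h : ¬i ≤ j) (r : R) : (single i j r : 𝕋) = 0 :=
  Subtype.ext <| by simp [single, h]

theorem single_apply_same {i j : Fin n} (h : i ≤ j) (r : R) : (single i j r : 𝕋).val i j = r := by
  rw [coe_single_of_le h, Matrix.single_apply_same]

@[simp]
theorem single_zero (i j : Fin n) : (single i j 0 : 𝕋) = 0 :=
  Subtype.ext <| by simp [single]

theorem single_add (i j : Fin n) (r s : R) :
    (single i j (r + s) : 𝕋) = single i j r + single i j s := by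
  by_cases h : i ≤ j
  · exact Subtype.ext <| by simp [coe_single_of_le h, Matrix.single_add]
  · simp [single_of_not_le h]

theorem single_mul_single {i j l : Fin n} (hij : i ≤ j) (hjl : j ≤ l) (r s : R) :
    (single i j r : 𝕋) * single j l s = single i l (r * s) :=
  Subtype.ext <| by
    simp [coe_single_of_le hij, coe_single_of_le hjl, coe_single_of_le (hij.trans hjl)]

def idem (i : Fin n) : 𝕋 := single i i 1

theorem isIdempotentElem_idem (i : Fin n) : IsIdempotentElem (idem i : 𝕋) := by
  rw [IsIdempotentElem, idem, single_mul_single le_rfl le_rfl, mul_one]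

theorem idem_mul_idem_of_ne {i j : Fin n} (h : i ≠ j) : (idem i : 𝕋) * idem j = 0 :=
  Subtype.ext <| by
    simpa [idem, coe_single_of_le] using Matrix.single_mul_single_of_ne (c := (1 : R)) i i j h 1

theorem sum_idem : ∑ i, (idem i : 𝕋) = 1 :=
  Subtype.ext <| by
    simp [idem, coe_single_of_le, Matrix.sum_single_one]

theorem idem_mul_mul_idem (i j : Fin n) (A : 𝕋) : idem i * A * idem j = single i j (A.val i j) := by
  have h : (idem i * A * idem j).val = Matrix.single i j (A.val i j) := by
    simp [idem, coe_single_of_le]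
  by_cases hij : i ≤ j
  · exact Subtype.ext <| by rw [h, coe_single_of_le hij]
  · exact Subtype.ext <| by simp [h, single_of_not_le hij, A.2 (not_le.1 hij)]

theorem idem_mul_single_mul_idem (i j : Fin n) (r : R) :
    idem i * single i j r * idem j = (single i j r : 𝕋) := by
  by_cases h : i ≤ j
  · rw [idem_mul_mul_idem, single_apply_same h]
  · rw [single_of_not_le h, mul_zero, zero_mul]

theorem eq_sum_single (A : 𝕋) : A = ∑ p, ∑ q, single p q (A.val p q) := by
  conv_lhs => rw [← one_mul A, ← mul_one (1 * A), ← sum_idem]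
  simp_rw [Finset.sum_mul, Finset.mul_sum, idem_mul_mul_idem]

theorem diag_mul (A B : 𝕋) (k : Fin n) : (A * B).val k k = A.val k k * B.val k k := by
  rw [MulMemClass.coe_mul, Matrix.mul_apply, Finset.sum_eq_single k]
  · intro m _ hm
    rcases lt_or_gt_of_ne hm with h | h
    · rw [A.2 h, zero_mul]
    · rw [B.2 h, mul_zero]
  · simp

/-- Membership in the `k`-th power of the ideal of strictly upper triangular matrices. -/
def VanishesBelow (k : ℕ) (A : 𝕋) : Prop :=
  ∀ p q : Fin n, (q : ℕ) < p + k → A.val p q = 0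

theorem vanishesBelow_zero (A : 𝕋) : VanishesBelow 0 A :=
  fun _ _ h => A.2 (Fin.lt_def.2 h)

theorem zero_vanishesBelow (k : ℕ) : VanishesBelow k (0 : 𝕋) :=
  fun _ _ _ => rfl

theorem vanishesBelow_one_iff {A : 𝕋} : VanishesBelow 1 A ↔ A ∈ strictlyUpper T R n :=
  ⟨fun h p q hqp => h p q (by rw [Fin.le_def] at hqp; omega),
    fun h p q hqp => h p q (by rw [Fin.le_def]; omega)⟩

theorem vanishesBelow_single {k : ℕ} {p q : Fin n} (h : (p : ℕ) + k ≤ q) (r : R) :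
    VanishesBelow k (single p q r : 𝕋) := by
  intro a b hab
  rw [coe_single_of_le (Fin.le_def.2 (by omega)), Matrix.single_apply, if_neg]
  rintro ⟨rfl, rfl⟩
  omega

theorem VanishesBelow.mul {a b : ℕ} {A B : 𝕋} (hA : VanishesBelow a A) (hB : VanishesBelow b B) :
    VanishesBelow (a + b) (A * B) := by
  intro p q h
  rw [MulMemClass.coe_mul, Matrix.mul_apply]
  refine Finset.sum_eq_zero fun m _ => ?_
  rcases lt_or_ge (m : ℕ) (p + a) with hm | hm
  · rw [hA p m hm, zero_mul]
  · rw [hB m q (by omega), mul_zero]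

theorem VanishesBelow.pow {A : 𝕋} (hA : VanishesBelow 1 A) (k : ℕ) : VanishesBelow k (A ^ k) := by
  induction k with
  | zero => exact vanishesBelow_zero _
  | succ k ih => exact pow_succ A k ▸ ih.mul hA

theorem VanishesBelow.eq_zero {A : 𝕋} (hA : VanishesBelow n A) : A = 0 :=
  Subtype.ext <| by
    ext p q
    exact hA p q (by omega)

theorem VanishesBelow.sum {k : ℕ} {ι : Type*} {s : Finset ι} {f : ι → 𝕋}
    (h : ∀ i ∈ s, VanishesBelow k (f i)) : VanishesBelow k (∑ i ∈ s, f i) := by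
  intro p q hpq
  rw [AddSubmonoidClass.coe_finsetSum, Matrix.sum_apply]
  exact Finset.sum_eq_zero fun i hi => h i hi p q hpq

theorem VanishesBelow.single_entry {k : ℕ} {A : 𝕋} (hA : VanishesBelow k A) (i j : Fin n) :
    VanishesBelow k (single i j (A.val i j) : 𝕋) := by
  simpa [idem_mul_mul_idem] using
    ((vanishesBelow_zero (idem i)).mul hA).mul (vanishesBelow_zero (idem j))

/-- A ring endomorphism preserving `J` preserves every `J ^ k`: an element of `J ^ (k + 1)` is
a sum of matrix units `single p q r = single p (p + 1) r * single (p + 1) q 1` with the second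
factor in `J ^ k`. -/
theorem VanishesBelow.map {f : 𝕋 →+* 𝕋}
    (hf : ∀ A ∈ strictlyUpper T R n, f A ∈ strictlyUpper T R n) {k : ℕ} {A : 𝕋}
    (hA : VanishesBelow k A) : VanishesBelow k (f A) := by
  induction k generalizing A with
  | zero => exact vanishesBelow_zero _
  | succ k ih =>
    rw [eq_sum_single A, map_sum]
    refine VanishesBelow.sum fun p _ => ?_
    rw [map_sum]
    refine VanishesBelow.sum fun q _ => ?_
    by_cases hq : (q : ℕ) < p + (k + 1)
    · rw [hA p q hq, single_zero, map_zero]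
      exact zero_vanishesBelow _
    · let m : Fin n := ⟨p + 1, by omega⟩
      have hpm : p ≤ m := Fin.le_def.2 (Nat.le_succ _)
      have hmq : m ≤ q := Fin.le_def.2 (by simp only [m]; omega)
      rw [← mul_one (A.val p q), ← single_mul_single hpm hmq, map_mul, Nat.add_comm k]
      refine VanishesBelow.mul ?_ (ih (vanishesBelow_single (by simp only [m]; omega) 1))
      exact vanishesBelow_one_iff.2 (hf _ (vanishesBelow_one_iff.1 (vanishesBelow_single le_rfl _)))

theorem mul_mul_apply_of_vanishesBelow {k : ℕ} (A : 𝕋) {B : 𝕋} (hB : VanishesBelow k B) (C : 𝕋)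
    {p q : Fin n} (hpq : (q : ℕ) = p + k) :
    (A * B * C).val p q = A.val p p * B.val p q * C.val q q := by
  have hAB : ∀ m : Fin n, (m : ℕ) ≤ q →
      (A * B).val p m = if m = q then A.val p p * B.val p q else 0 := by
    intro m hm
    rw [MulMemClass.coe_mul, Matrix.mul_apply, Finset.sum_eq_single p]
    · split_ifs with h
      · rw [h]
      · rw [hB p m (by omega), mul_zero]
    · intro l _ hl
      rcases lt_or_gt_of_ne hl with h | h
      · rw [A.2 h, zero_mul]
      · rw [hB l m (by rw [Fin.lt_def] at h; omega), mul_zero]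
    · simp
  rw [MulMemClass.coe_mul, Matrix.mul_apply, Finset.sum_eq_single q]
  · rw [hAB q le_rfl, if_pos rfl]
  · intro m _ hm
    rcases lt_or_gt_of_ne hm with h | h
    · rw [hAB m h.le, if_neg hm, zero_mul]
    · rw [C.2 h, mul_zero]
  · simp

theorem isUnit_of_forall_apply_self_eq_one {A : 𝕋} (h : ∀ i, A.val i i = 1) : IsUnit A := by
  have hJ : VanishesBelow 1 (1 - A) := fun p q hqp => by
    rcases (Nat.lt_succ_iff.1 hqp).lt_or_eq with hlt | heq
    · exact (1 - A).2 (Fin.lt_def.2 hlt)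
    · obtain rfl : q = p := Fin.ext heq
      simp [h]
  simpa using (show IsNilpotent (1 - A) from ⟨n, (hJ.pow n).eq_zero⟩).isUnit_one_sub

section Triangular

variable (φ : triangularSubalgebra T R n ≃ₐ[T] triangularSubalgebra T R n)

theorem isIdempotentElem_apply_idem_apply (i k : Fin n) :
    IsIdempotentElem ((φ (idem i : 𝕋)).val k k) := by
  rw [IsIdempotentElem, ← diag_mul, ← map_mul, (isIdempotentElem_idem i).eq]

theorem apply_idem_apply_mul_apply_idem_apply {i j : Fin n} (h : i ≠ j) (k : Fin n) :
    (φ (idem i : 𝕋)).val k k * (φ (idem j : 𝕋)).val k k = 0 := by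
  rw [← diag_mul, ← map_mul, idem_mul_idem_of_ne h, map_zero]
  rfl

def IsTriangular (φ : 𝕋 ≃ₐ[T] 𝕋) : Prop :=
  φ '' strictlyUpper T R n = strictlyUpper T R n

namespace IsTriangular

variable {φ} (hφ : IsTriangular φ)
include hφ

theorem symm : IsTriangular φ.symm := by
  rw [IsTriangular]
  conv_lhs => rw [← hφ, Set.image_image]
  simp

theorem vanishesBelow_apply {k : ℕ} {A : 𝕋} (hA : VanishesBelow k A) : VanishesBelow k (φ A) :=
  hA.map (f := (φ : 𝕋 →+* 𝕋)) fun _ hB => hφ ▸ Set.mem_image_of_mem φ hB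

variable [NeZero n]

/-- `y i j` is the `(0, k)` entry of `φ (single i j (X i j))` for `X = φ⁻¹ (single 0 k 1)`, which
lies in `J ^ k`; only the entries on the `k`-th superdiagonal of `X` contribute. -/
theorem exists_sum_superdiag_eq_one (k : Fin n) :
    ∃ y : Fin n → Fin n → R, ∑ i, ∑ j, y i j = 1 ∧
      (∀ i j, y i j = (φ (idem i : 𝕋)).val 0 0 * y i j * (φ (idem j : 𝕋)).val k k) ∧
      ∀ i j : Fin n, (j : ℕ) ≠ i + k → y i j = 0 := by
  set X := φ.symm (single 0 k 1)
  have hX : VanishesBelow k X := hφ.symm.vanishesBelow_apply (vanishesBelow_single (by simp) 1)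
  refine ⟨fun i j => (φ (single i j (X.val i j))).val 0 k, ?_, fun i j => ?_, fun i j hij => ?_⟩
  · have h1 : (φ X).val 0 k = 1 := by simp [X, single_apply_same (Fin.zero_le k)]
    conv_rhs => rw [← h1, eq_sum_single X]
    simp [Matrix.sum_apply]
  · beta_reduce
    conv_lhs => rw [← idem_mul_single_mul_idem]
    rw [map_mul, map_mul,
      mul_mul_apply_of_vanishesBelow _ (hφ.vanishesBelow_apply (hX.single_entry i j)) _ (by simp)]
  · rcases lt_or_gt_of_ne hij with h | h
    · simp [hX i j h]
    · exact hφ.vanishesBelow_apply (vanishesBelow_single (k := k + 1) (by omega) _) 0 k (by simp)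

theorem apply_idem_zero_apply_zero : (φ (idem 0 : 𝕋)).val 0 0 = (1 : R) := by
  let l : Fin n := ⟨n - 1, by have := NeZero.pos n; omega⟩
  obtain ⟨y, hsum, hy, hzero⟩ := hφ.exists_sum_superdiag_eq_one l
  have hsum' : ∑ i, ∑ j, y i j = y 0 l := by
    rw [← Fintype.sum_prod_type']
    refine Fintype.sum_eq_single (0, l) fun ⟨i, j⟩ hij => hzero i j fun h => hij ?_
    have hl : (l : ℕ) = n - 1 := rfl
    have := j.isLt
    refine Prod.ext (Fin.ext ?_) (Fin.ext ?_)
    · show (i : ℕ) = ((0 : Fin n) : ℕ)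
      rw [Fin.val_zero]
      omega
    · show (j : ℕ) = l
      omega
  have h1 : y 0 l = 1 := hsum' ▸ hsum
  rw [hy, mul_assoc] at h1
  exact (isIdempotentElem_apply_idem_apply φ 0 0).eq_one_of_mul_eq_one h1

theorem apply_idem_apply_self (k : Fin n) : (φ (idem k : 𝕋)).val k k = (1 : R) := by
  obtain ⟨y, hsum, hy, hzero⟩ := hφ.exists_sum_superdiag_eq_one k
  have hc : ∀ i ≠ 0, (φ (idem i : 𝕋)).val 0 0 = 0 := fun i hi => by
    simpa [hφ.apply_idem_zero_apply_zero] using apply_idem_apply_mul_apply_idem_apply φ hi 0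
  have hsum' : ∑ i, ∑ j, y i j = y 0 k := by
    rw [← Fintype.sum_prod_type']
    refine Fintype.sum_eq_single (0, k) fun ⟨i, j⟩ hij => ?_
    by_cases hi : i = 0
    · subst hi
      exact hzero 0 j fun h => hij (Prod.ext rfl (Fin.ext (by simpa using h)))
    · rw [hy, hc i hi, zero_mul, zero_mul]
  have h1 : y 0 k = 1 := hsum' ▸ hsum
  rw [hy, hφ.apply_idem_zero_apply_zero, one_mul] at h1
  exact (isIdempotentElem_apply_idem_apply φ k k).eq_one_of_mul_eq_one' h1

theorem exists_conj_map_idem : ∃ u : 𝕋ˣ, ∀ i, φ (idem i) = ↑u * (idem i : 𝕋) * ↑u⁻¹ := by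
  let u : 𝕋 := ∑ i, φ (idem i) * idem i
  have hu_apply : ∀ a b, u.val a b = (φ (idem b : 𝕋)).val a b := fun a b => by
    simp only [u, AddSubmonoidClass.coe_finsetSum, Matrix.sum_apply, MulMemClass.coe_mul, idem,
      coe_single_of_le le_rfl]
    rw [Finset.sum_eq_single b (fun c _ hc => Matrix.mul_single_apply_of_ne _ _ _ _ _ hc.symm _)
      (by simp), Matrix.mul_single_apply_same, mul_one]
  have hunit : IsUnit u := isUnit_of_forall_apply_self_eq_one fun i => by
    rw [hu_apply, hφ.apply_idem_apply_self]
  refine ⟨hunit.unit, fun i => ?_⟩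
  rw [IsUnit.unit_spec, Units.eq_mul_inv_iff_mul_eq, IsUnit.unit_spec]
  have hl : φ (idem i) * u = φ (idem i) * idem i := by
    rw [Finset.mul_sum, Finset.sum_eq_single i]
    · rw [← mul_assoc, ← map_mul, (isIdempotentElem_idem i).eq]
    · intro j _ hj
      rw [← mul_assoc, ← map_mul, idem_mul_idem_of_ne hj.symm, map_zero, zero_mul]
    · simp
  have hr : u * idem i = φ (idem i) * idem i := by
    rw [Finset.sum_mul, Finset.sum_eq_single i]
    · rw [mul_assoc, (isIdempotentElem_idem i).eq]
    · intro j _ hj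
      rw [mul_assoc, idem_mul_idem_of_ne hj, mul_zero]
    · simp
  rw [hl, hr]

end IsTriangular

end Triangular

def diagonalUnit (w : Fin n → Rˣ) : 𝕋ˣ where
  val := ⟨Matrix.diagonal fun i => w i, fun _ _ h => Matrix.diagonal_apply_ne _ h.ne'⟩
  inv := ⟨Matrix.diagonal fun i => ↑(w i)⁻¹, fun _ _ h => Matrix.diagonal_apply_ne _ h.ne'⟩
  val_inv := Subtype.ext <| by simp [Matrix.diagonal_mul_diagonal, Matrix.diagonal_one]
  inv_val := Subtype.ext <| by simp [Matrix.diagonal_mul_diagonal, Matrix.diagonal_one]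

theorem coe_diagonalUnit (w : Fin n → Rˣ) :
    ((diagonalUnit w : 𝕋ˣ) : 𝕋).val = Matrix.diagonal fun i => ↑(w i) :=
  rfl

theorem coe_inv_diagonalUnit (w : Fin n → Rˣ) :
    (((diagonalUnit w)⁻¹ : 𝕋ˣ) : 𝕋).val = Matrix.diagonal fun i => ↑(w i)⁻¹ :=
  rfl

theorem entrywiseMap_apply (α : R ≃ₐ[T] R) (A : 𝕋) (a b : Fin n) :
    (entrywiseMap T R n α A).val a b = α (A.val a b) :=
  rfl

section FixingIdem

variable {ψ : triangularSubalgebra T R n ≃ₐ[T] triangularSubalgebra T R n}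

variable (ψ) in
def entryMap (i j : Fin n) (r : R) : R := (ψ (single i j r)).val i j

theorem entryMap_add (i j : Fin n) (r s : R) :
    entryMap ψ i j (r + s) = entryMap ψ i j r + entryMap ψ i j s := by
  simp [entryMap, single_add]

variable (hψ : ∀ i, ψ (idem i) = idem i)
include hψ

theorem symm_apply_idem (i : Fin n) : ψ.symm (idem i) = idem i := by
  rw [AlgEquiv.symm_apply_eq, hψ]

theorem map_single (i j : Fin n) (r : R) : ψ (single i j r) = single i j (entryMap ψ i j r) := by
  rw [← idem_mul_single_mul_idem, map_mul, map_mul, hψ, hψ, idem_mul_mul_idem]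
  rfl

theorem map_apply_of_le (A : 𝕋) {a b : Fin n} (hab : a ≤ b) :
    (ψ A).val a b = entryMap ψ a b (A.val a b) := by
  rw [entryMap, ← idem_mul_mul_idem, map_mul, map_mul, hψ, hψ, idem_mul_mul_idem,
    single_apply_same hab]

theorem entryMap_mul {i j l : Fin n} (hij : i ≤ j) (hjl : j ≤ l) (r s : R) :
    entryMap ψ i l (r * s) = entryMap ψ i j r * entryMap ψ j l s := by
  rw [entryMap, ← single_mul_single hij hjl, map_mul, map_single hψ, map_single hψ,
    single_mul_single hij hjl, single_apply_same (hij.trans hjl)]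

theorem entryMap_entryMap_symm {i j : Fin n} (hij : i ≤ j) (r : R) :
    entryMap ψ i j (entryMap ψ.symm i j r) = r := by
  rw [entryMap, ← map_single (symm_apply_idem hψ), AlgEquiv.apply_symm_apply,
    single_apply_same hij]

variable [NeZero n]

def entryAlgEquiv : R ≃ₐ[T] R where
  toFun := entryMap ψ 0 0
  invFun := entryMap ψ.symm 0 0
  left_inv r := by
    simpa using entryMap_entryMap_symm (ψ := ψ.symm) (symm_apply_idem hψ) (le_refl 0) r
  right_inv := entryMap_entryMap_symm hψ le_rfl
  map_mul' := entryMap_mul hψ le_rfl le_rfl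
  map_add' := entryMap_add 0 0
  commutes' t := by
    have h : (single 0 0 (algebraMap T R t) : 𝕋) = t • idem 0 :=
      Subtype.ext <| by simp [idem, coe_single_of_le, Algebra.algebraMap_eq_smul_one]
    change entryMap ψ 0 0 _ = _
    rw [entryMap, h, map_smul, hψ]
    simp [idem, coe_single_of_le, Algebra.algebraMap_eq_smul_one]

theorem entryAlgEquiv_apply (r : R) : entryAlgEquiv hψ r = entryMap ψ 0 0 r :=
  rfl

theorem entryMap_zero_one_mul_entryMap {a b : Fin n} (hab : a ≤ b) (r : R) :
    entryMap ψ 0 a 1 * entryMap ψ a b r = entryMap ψ 0 0 r * entryMap ψ 0 b 1 := by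
  rw [← entryMap_mul hψ (Fin.zero_le a) hab, ← entryMap_mul hψ le_rfl (Fin.zero_le b), one_mul,
    mul_one]

theorem isUnit_entryMap_zero_one (i : Fin n) : IsUnit (entryMap ψ 0 i 1) := by
  rw [isUnit_iff_exists_and_exists]
  set x := entryMap ψ.symm 0 i 1
  refine ⟨⟨entryMap ψ i i x, ?_⟩, ⟨entryMap ψ 0 0 x, ?_⟩⟩
  · rw [← entryMap_mul hψ (Fin.zero_le i) le_rfl, one_mul,
      entryMap_entryMap_symm hψ (Fin.zero_le i)]
  · rw [← entryMap_mul hψ le_rfl (Fin.zero_le i), mul_one,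
      entryMap_entryMap_symm hψ (Fin.zero_le i)]

theorem exists_eq_conj_entrywiseMap :
    ∃ (v : 𝕋ˣ) (α : R ≃ₐ[T] R), ∀ A, ψ A = ↑v * entrywiseMap T R n α A * ↑v⁻¹ := by
  let w i := (isUnit_entryMap_zero_one hψ i).unit
  refine ⟨diagonalUnit fun i => (w i)⁻¹, entryAlgEquiv hψ, fun A => Subtype.ext ?_⟩
  ext a b
  simp only [MulMemClass.coe_mul, coe_diagonalUnit, coe_inv_diagonalUnit, inv_inv,
    Matrix.diagonal_mul, Matrix.mul_diagonal, entrywiseMap_apply, entryAlgEquiv_apply]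
  by_cases hab : a ≤ b
  · rw [map_apply_of_le hψ A hab, mul_assoc, Units.eq_inv_mul_iff_mul_eq]
    exact entryMap_zero_one_mul_entryMap hψ hab _
  · have hba : b < a := not_le.1 hab
    rw [(ψ A).2 hba, A.2 hba, entryMap, single_zero, map_zero]
    simp

end FixingIdem

end triangularSubalgebra

/-- Every triangular automorphism of the upper triangular matrix algebra `T(n,R)` is a
product of an inner automorphism and a ring automorphism (one induced entrywise by an
automorphism of `R`). -/
theorem stmt7 (T R : Type*) [CommRing T] [Ring R] [Algebra T R] (n : ℕ) (hn : 1 ≤ n)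
    (φ : triangularSubalgebra T R n ≃ₐ[T] triangularSubalgebra T R n)
    (htri : φ '' strictlyUpper T R n = strictlyUpper T R n) :
    ∃ (u : (triangularSubalgebra T R n)ˣ) (α : R ≃ₐ[T] R),
      ∀ A : triangularSubalgebra T R n,
        φ A = ↑u * entrywiseMap T R n α A * ↑u⁻¹ := by
  have : NeZero n := ⟨by omega⟩
  obtain ⟨u, hu⟩ := triangularSubalgebra.IsTriangular.exists_conj_map_idem htri
  let ψ := φ.trans (MulSemiringAction.toAlgEquiv T _ (ConjAct.toConjAct u⁻¹))
  have hψ : ∀ A, ψ A = ↑u⁻¹ * φ A * ↑u := by simp [ψ, ConjAct.units_smul_def]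
  obtain ⟨v, α, hv⟩ := triangularSubalgebra.exists_eq_conj_entrywiseMap (ψ := ψ) fun i => by
    simp [hψ, hu, mul_assoc]
  refine ⟨u * v, α, fun A => ?_⟩
  calc φ A = ↑u * ψ A * ↑u⁻¹ := by simp [hψ, mul_assoc]
    _ = _ := by simp [hv, mul_assoc]
end

section
/- Let T be a commutative ring, R a nontrivial T-algebra, n ≥ 1, and K = T(n,R) the algebra of upper triangular n×n matrices over R. Let φ be a T-algebra automorphism of K that maps the diagonal subalgebra L (matrices with all off-diagonal entries zero) onto itself and maps the set M of strictly upper triangular matrices onto itself. Then φ fixes every diagonal matrix unit: φ(E_{ii}) = E_{ii} for all i = 1, …, n, where E_{ii} is the matrix with 1 in position (i,i) and 0 elsewhere. -/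
/-- The diagonal matrix unit `E i i` as an element of the triangular matrix algebra. -/
def diagMatrixUnit (T R : Type*) [CommRing T] [Ring R] [Algebra T R] (n : ℕ) (i : Fin n) :
    triangularSubalgebra T R n :=
  ⟨Matrix.single i i (1 : R), fun a b hab =>
    Matrix.single_apply_of_ne _ _ _ _ _
      (by rintro ⟨rfl, rfl⟩; exact lt_irrefl _ hab)⟩

/-!
The images `φ (E i i)` are diagonal, say `diagonal (f i)`. Since the `E i i` sum to `1`, every
column of `f` sums to `1`. For `j ≤ i` and `M` strictly upper triangular, `E i i * M * E j j = 0`;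
as `φ` permutes the strictly upper triangular matrices, `φ (E i i) * E k l * φ (E j j) = 0` for
`k < l`, i.e. `f i k * f j l = 0`. These two relations force `f i k = δ i k`: the entries above the
diagonal vanish by induction up the rows, those below by induction down the rows.
-/

open Matrix

section

variable {ι R : Type*} [Fintype ι] [LinearOrder ι] [Ring R] {f : ι → ι → R}

theorem eq_zero_of_lt_of_sum_eq_one (hsum : ∀ k, ∑ i, f i k = 1)
    (hrel : ∀ i j k l, j ≤ i → k < l → f i k * f j l = 0) {j l : ι} (hjl : j < l) :
    f j l = 0 := by
  induction j using WellFoundedLT.induction generalizing l with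
  | ind j ih =>
    calc f j l = ∑ i, f i j * f j l := by rw [← Finset.sum_mul, hsum, one_mul]
      _ = 0 := Finset.sum_eq_zero fun i _ => by
        rcases lt_or_ge i j with hij | hji
        · rw [ih i hij hij, zero_mul]
        · exact hrel i j j l hji hjl

theorem eq_zero_of_gt_of_sum_eq_one (hsum : ∀ k, ∑ i, f i k = 1)
    (hrel : ∀ i j k l, j ≤ i → k < l → f i k * f j l = 0) {i k : ι} (hki : k < i) :
    f i k = 0 := by
  induction i using WellFoundedGT.induction generalizing k with
  | ind i ih =>
    calc f i k = ∑ j, f i k * f j i := by rw [← Finset.mul_sum, hsum, mul_one]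
      _ = 0 := Finset.sum_eq_zero fun j _ => by
        rcases lt_or_ge i j with hij | hji
        · rw [ih j hij hij, mul_zero]
        · exact hrel i j k i hji hki

theorem eq_pi_single_of_sum_eq_one [DecidableEq ι] (hsum : ∀ k, ∑ i, f i k = 1)
    (hrel : ∀ i j k l, j ≤ i → k < l → f i k * f j l = 0) (i : ι) :
    f i = Pi.single i 1 := by
  have hoff : ∀ i k, i ≠ k → f i k = 0 := fun i k hik => hik.lt_or_gt.elim
    (eq_zero_of_lt_of_sum_eq_one hsum hrel) (eq_zero_of_gt_of_sum_eq_one hsum hrel)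
  ext k
  rcases eq_or_ne k i with rfl | hki
  · rw [Pi.single_eq_same, ← hsum k, Finset.sum_eq_single_of_mem k (Finset.mem_univ k)
      fun j _ hjk => hoff j k hjk]
  · rw [Pi.single_eq_of_ne hki, hoff i k hki.symm]

end

section

variable {T R : Type*} [CommRing T] [Ring R] [Algebra T R] {n : ℕ}

def offDiagMatrixUnit {k l : Fin n} (hkl : k < l) : triangularSubalgebra T R n :=
  ⟨single k l 1, fun _ _ hba => single_apply_of_ne _ _ _ _ _ fun h => by
    obtain ⟨rfl, rfl⟩ := h; exact hkl.not_gt hba⟩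

theorem offDiagMatrixUnit_mem_strictlyUpper {k l : Fin n} (hkl : k < l) :
    offDiagMatrixUnit (T := T) (R := R) hkl ∈ strictlyUpper T R n :=
  fun _ _ hba => single_apply_of_ne _ _ _ _ _ fun h => by
    obtain ⟨rfl, rfl⟩ := h; exact hkl.not_ge hba

theorem isDiag_diagMatrixUnit (i : Fin n) :
    (diagMatrixUnit T R n i : Matrix (Fin n) (Fin n) R).IsDiag := by
  simp [diagMatrixUnit, ← diagonal_single]

theorem sum_diagMatrixUnit : ∑ i, diagMatrixUnit T R n i = 1 := by
  apply Subtype.ext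
  ext a b
  simp [diagMatrixUnit, ← diagonal_single, Matrix.sum_apply, diagonal_apply, one_apply,
    Pi.single_apply]

theorem diagMatrixUnit_mul_mul_diagMatrixUnit {A : triangularSubalgebra T R n}
    (hA : A ∈ strictlyUpper T R n) {i j : Fin n} (hji : j ≤ i) :
    diagMatrixUnit T R n i * A * diagMatrixUnit T R n j = 0 := by
  apply Subtype.ext
  simp [diagMatrixUnit, hA i j hji]

variable (φ : triangularSubalgebra T R n →ₐ[T] triangularSubalgebra T R n)

theorem sum_map_diagMatrixUnit_apply_self (k : Fin n) :
    ∑ i, (φ (diagMatrixUnit T R n i) : Matrix (Fin n) (Fin n) R) k k = 1 := by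
  simpa [Matrix.sum_apply] using
    congrArg (fun A : triangularSubalgebra T R n => (A : Matrix (Fin n) (Fin n) R) k k)
      (congrArg φ sum_diagMatrixUnit)

theorem map_diagMatrixUnit_mul_mul_map_diagMatrixUnit
    (htri : strictlyUpper T R n ⊆ φ '' strictlyUpper T R n) {A : triangularSubalgebra T R n}
    (hA : A ∈ strictlyUpper T R n) {i j : Fin n} (hji : j ≤ i) :
    φ (diagMatrixUnit T R n i) * A * φ (diagMatrixUnit T R n j) = 0 := by
  obtain ⟨B, hB, rfl⟩ := htri hA
  rw [← map_mul, ← map_mul, diagMatrixUnit_mul_mul_diagMatrixUnit hB hji, map_zero]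

theorem map_diagMatrixUnit_apply_mul_apply_eq_zero
    (htri : strictlyUpper T R n ⊆ φ '' strictlyUpper T R n)
    (hdiag : ∀ i, (φ (diagMatrixUnit T R n i) : Matrix (Fin n) (Fin n) R).IsDiag)
    {i j k l : Fin n} (hji : j ≤ i) (hkl : k < l) :
    (φ (diagMatrixUnit T R n i) : Matrix (Fin n) (Fin n) R) k k *
      (φ (diagMatrixUnit T R n j) : Matrix (Fin n) (Fin n) R) l l = 0 := by
  have h := congrArg (fun A : triangularSubalgebra T R n => (A : Matrix (Fin n) (Fin n) R) k l)
    (map_diagMatrixUnit_mul_mul_map_diagMatrixUnit φ htri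
      (offDiagMatrixUnit_mem_strictlyUpper (R := R) hkl) hji)
  push_cast at h
  rw [← (hdiag i).diagonal_diag, ← (hdiag j).diagonal_diag] at h
  simpa [offDiagMatrixUnit] using h

end

theorem stmt8_general (T R : Type*) [CommRing T] [Ring R] [Algebra T R]
    (n : ℕ)
    (φ : triangularSubalgebra T R n ≃ₐ[T] triangularSubalgebra T R n)
    (hdiag : φ '' {A : triangularSubalgebra T R n |
        ∀ i j : Fin n, i ≠ j → (A : Matrix (Fin n) (Fin n) R) i j = 0} =
      {A : triangularSubalgebra T R n |
        ∀ i j : Fin n, i ≠ j → (A : Matrix (Fin n) (Fin n) R) i j = 0})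
    (htri : φ '' strictlyUpper T R n = strictlyUpper T R n) :
    ∀ i : Fin n, φ (diagMatrixUnit T R n i) = diagMatrixUnit T R n i := by
  have hφdiag : ∀ i, (φ (diagMatrixUnit T R n i) : Matrix (Fin n) (Fin n) R).IsDiag :=
    fun i a b hab => hdiag.subset
      (Set.mem_image_of_mem φ fun a b hab => isDiag_diagMatrixUnit i hab) a b hab
  have hf := eq_pi_single_of_sum_eq_one
    (f := fun i => diag (φ (diagMatrixUnit T R n i) : Matrix (Fin n) (Fin n) R))
    (sum_map_diagMatrixUnit_apply_self φ.toAlgHom)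
    (fun _ _ _ _ hji hkl =>
      map_diagMatrixUnit_apply_mul_apply_eq_zero φ.toAlgHom htri.superset hφdiag hji hkl)
  intro i
  apply Subtype.ext
  rw [← (hφdiag i).diagonal_diag, hf i, diagonal_single]
  rfl

/-- If an automorphism of the upper triangular matrix algebra maps the diagonal subalgebra
onto itself and the set of strictly upper triangular matrices onto itself, then it fixes
every diagonal matrix unit `E i i`. -/
theorem stmt8 (T R : Type*) [CommRing T] [Ring R] [Algebra T R] [Nontrivial R]
    (n : ℕ) (hn : 1 ≤ n)
    (φ : triangularSubalgebra T R n ≃ₐ[T] triangularSubalgebra T R n)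
    (hdiag : φ '' {A : triangularSubalgebra T R n |
        ∀ i j : Fin n, i ≠ j → (A : Matrix (Fin n) (Fin n) R) i j = 0} =
      {A : triangularSubalgebra T R n |
        ∀ i j : Fin n, i ≠ j → (A : Matrix (Fin n) (Fin n) R) i j = 0})
    (htri : φ '' strictlyUpper T R n = strictlyUpper T R n) :
    ∀ i : Fin n, φ (diagMatrixUnit T R n i) = diagMatrixUnit T R n i :=
  stmt8_general T R n φ hdiag htri
end

section
/- Let T be a commutative ring, R a T-algebra, n ≥ 1, and K = T(n,R) the algebra of upper triangular n×n matrices over R. Let c_{ij} (for 1 ≤ i ≤ j ≤ n) be invertible central elements of R with c_{ii} = 1 for all i and c_{ij}·c_{jk} = c_{ik} whenever i ≤ j ≤ k. Then the map ζ : K → K defined by ζ(A)(i,j) = c_{ij}·A(i,j) for i ≤ j (and 0 below the diagonal) is a T-algebra automorphism of K, and ζ is inner: there is an invertible element v of K (which can be taken to be a diagonal matrix with central invertible entries) such that ζ(A) = v⁻¹·A·v for all A ∈ K. -/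
/-- Conjugation by a unit as a `T`-algebra automorphism. -/
def innerConjAux (T : Type*) {A : Type*} [CommRing T] [Ring A] [Algebra T A] (u : Aˣ) :
    A ≃ₐ[T] A where
  toFun x := ↑u⁻¹ * x * ↑u
  invFun x := ↑u * x * ↑u⁻¹
  left_inv x := by
    show ↑u * (↑u⁻¹ * x * ↑u) * ↑u⁻¹ = x
    rw [← mul_assoc, Units.mul_inv_cancel_left, Units.mul_inv_cancel_right]
  right_inv x := by
    show ↑u⁻¹ * (↑u * x * ↑u⁻¹) * ↑u = x
    rw [← mul_assoc, Units.inv_mul_cancel_left, Units.inv_mul_cancel_right]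
  map_mul' x y := by
    show ↑u⁻¹ * (x * y) * ↑u = (↑u⁻¹ * x * ↑u) * (↑u⁻¹ * y * ↑u)
    simp only [mul_assoc, Units.mul_inv_cancel_left]
  map_add' x y := by
    show ↑u⁻¹ * (x + y) * ↑u = ↑u⁻¹ * x * ↑u + ↑u⁻¹ * y * ↑u
    rw [mul_add, add_mul]
  commutes' t := by
    show ↑u⁻¹ * algebraMap T A t * ↑u = algebraMap T A t
    rw [mul_assoc, Algebra.commutes t (↑u : A), ← mul_assoc, Units.inv_mul, one_mul]

/-- Given invertible central elements `c i j` (for `i ≤ j`) of `R` with `c i i = 1` and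
`c i j * c j k = c i k` for `i ≤ j ≤ k`, the map `ζ(A)(i,j) = c i j * A i j` (for `i ≤ j`,
zero below the diagonal) is a `T`-algebra automorphism of the upper triangular matrix
algebra `T(n,R)`, and it is inner, realized by conjugation by an invertible diagonal matrix
with central invertible entries. -/
theorem stmt9 (T R : Type*) [CommRing T] [Ring R] [Algebra T R] (n : ℕ) (hn : 1 ≤ n)
    (c : Fin n → Fin n → R)
    (hcentral : ∀ i j : Fin n, i ≤ j → ∀ r : R, c i j * r = r * c i j)
    (hunit : ∀ i j : Fin n, i ≤ j → IsUnit (c i j))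
    (hone : ∀ i : Fin n, c i i = 1)
    (hmul : ∀ i j k : Fin n, i ≤ j → j ≤ k → c i j * c j k = c i k) :
    ∃ ζ : triangularSubalgebra T R n ≃ₐ[T] triangularSubalgebra T R n,
      (∀ A : triangularSubalgebra T R n,
        (ζ A : Matrix (Fin n) (Fin n) R) =
          Matrix.of fun i j =>
            if i ≤ j then c i j * (A : Matrix (Fin n) (Fin n) R) i j else 0) ∧
      ∃ v : (triangularSubalgebra T R n)ˣ,
        (∀ i j : Fin n, i ≠ j → ((v : triangularSubalgebra T R n) :
            Matrix (Fin n) (Fin n) R) i j = 0) ∧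
        (∀ i : Fin n,
          IsUnit (((v : triangularSubalgebra T R n) : Matrix (Fin n) (Fin n) R) i i) ∧
          ∀ r : R, ((v : triangularSubalgebra T R n) : Matrix (Fin n) (Fin n) R) i i * r =
            r * ((v : triangularSubalgebra T R n) : Matrix (Fin n) (Fin n) R) i i) ∧
        ∀ A : triangularSubalgebra T R n, ζ A = ↑v⁻¹ * A * ↑v := by
  classical
  set K := triangularSubalgebra T R n with hK
  set z : Fin n := ⟨0, hn⟩ with hzdef
  have hz : ∀ i : Fin n, z ≤ i := fun i => Fin.le_def.mpr (Nat.zero_le _)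
  set w : Fin n → Rˣ := fun i => (hunit z i (hz i)).unit with hwdef
  have hw : ∀ i, (w i : R) = c z i := fun i => (hunit z i (hz i)).unit_spec
  have hwc : ∀ i (r : R), (w i : R) * r = r * (w i : R) := fun i r => by
    rw [hw]; exact hcentral z i (hz i) r
  have hdmem : ∀ f : Fin n → R, Matrix.diagonal f ∈ K :=
    fun f i j hij => Matrix.diagonal_apply_ne _ (ne_of_lt hij).symm
  set D : K := ⟨Matrix.diagonal fun i => (w i : R), hdmem _⟩ with hDdef
  set D' : K := ⟨Matrix.diagonal fun i => ((w i)⁻¹ : Rˣ), hdmem _⟩ with hD'def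
  have hDD' : D * D' = 1 := by
    apply Subtype.ext
    show (Matrix.diagonal _ : Matrix (Fin n) (Fin n) R) * Matrix.diagonal _ = 1
    rw [Matrix.diagonal_mul_diagonal]
    simp [Units.mul_inv]
  have hD'D : D' * D = 1 := by
    apply Subtype.ext
    show (Matrix.diagonal _ : Matrix (Fin n) (Fin n) R) * Matrix.diagonal _ = 1
    rw [Matrix.diagonal_mul_diagonal]
    simp [Units.inv_mul]
  set v : Kˣ := ⟨D, D', hDD', hD'D⟩ with hv
  have hvD : (↑v : K) = D := rfl
  have hvD' : (↑v⁻¹ : K) = D' := rfl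
  refine ⟨innerConjAux T v, ?_, v, ?_, ?_, fun A => rfl⟩
  · intro A
    show ((D' * A * D : K) : Matrix (Fin n) (Fin n) R) = _
    rw [MulMemClass.coe_mul, MulMemClass.coe_mul, hDdef, hD'def]
    ext i j
    rw [Matrix.mul_diagonal, Matrix.diagonal_mul, Matrix.of_apply]
    by_cases hij : i ≤ j
    · rw [if_pos hij]
      calc (↑(w i)⁻¹ : R) * (A : Matrix (Fin n) (Fin n) R) i j * (w j : R)
          = (↑(w i)⁻¹ : R) * (c z j * (A : Matrix (Fin n) (Fin n) R) i j) := by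
            rw [hw j, mul_assoc, ← hcentral z j (hz j)]
        _ = (↑(w i)⁻¹ : R) * (c z i * c i j) * (A : Matrix (Fin n) (Fin n) R) i j := by
            rw [← hmul z i j (hz i) hij, ← mul_assoc]
        _ = (↑(w i)⁻¹ : R) * (w i : R) * c i j * (A : Matrix (Fin n) (Fin n) R) i j := by
            rw [← hw i, ← mul_assoc]
        _ = c i j * (A : Matrix (Fin n) (Fin n) R) i j := by
            rw [Units.inv_mul, one_mul]
    · rw [if_neg hij, A.2 (lt_of_not_ge hij), mul_zero, zero_mul]
  · intro i j hij
    rw [hvD, hDdef]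
    exact Matrix.diagonal_apply_ne _ hij
  · intro i
    rw [hvD, hDdef]
    show IsUnit ((Matrix.diagonal fun i => (w i : R)) i i) ∧
      ∀ r : R, (Matrix.diagonal fun i => (w i : R)) i i * r =
        r * (Matrix.diagonal fun i => (w i : R)) i i
    rw [Matrix.diagonal_apply_eq]
    exact ⟨(w i).isUnit, hwc i⟩
end

section
/- Let T be a commutative ring, R a T-algebra, and let k, ℓ be positive integers with c = lcm(k,ℓ), ℓ' = c/k, k' = c/ℓ. Set P = M(k,R), Q = M(ℓ,R), H = M(c,R), and let V be the P-Q-bimodule of k×ℓ matrices over R under matrix multiplication. Identify H with the ℓ'×ℓ' block matrix algebra over P via a fixed bijection {1,…,c} ≅ {1,…,ℓ'}×{1,…,k}, and with the k'×k' block matrix algebra over Q via a fixed bijection {1,…,c} ≅ {1,…,k'}×{1,…,ℓ}; through these identifications, a T-algebra automorphism α of P induces the T-algebra automorphism ᾱ of H acting entrywise on the ℓ'×ℓ' blocks, and a T-algebra automorphism γ of Q induces the T-algebra automorphism γ̄ of H acting entrywise on the k'×k' blocks. Then for α ∈ Aut_T P and γ ∈ Aut_T Q the following are equivalent: (i) there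 exists an additive, T-linear bijection β : V → V satisfying β(x·v·y) = α(x)·β(v)·γ(y) for all x ∈ P, v ∈ V, y ∈ Q (i.e., an isomorphism of P-Q-bimodules V → _α V_γ); (ii) the T-algebra automorphism ᾱ⁻¹ ∘ γ̄ of H is inner, i.e., there is an invertible u ∈ H with (ᾱ⁻¹ ∘ γ̄)(h) = u·h·u⁻¹ for all h ∈ H. -/
/-- Through a fixed bijection `Fin c ≃ Fin m × Fin k`, identify `M(c,R)` with the `m × m`
block matrix algebra over `M(k,R)`; a `T`-algebra automorphism `α` of `M(k,R)` then
induces the `T`-algebra automorphism of `M(c,R)` acting blockwise by `α`. -/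
def blockInducedAuto (T R : Type*) [CommRing T] [Ring R] [Algebra T R]
    {c m k : ℕ} (e : Fin c ≃ Fin m × Fin k)
    (α : Matrix (Fin k) (Fin k) R ≃ₐ[T] Matrix (Fin k) (Fin k) R) :
    Matrix (Fin c) (Fin c) R ≃ₐ[T] Matrix (Fin c) (Fin c) R :=
  (((Matrix.reindexAlgEquiv T R e).trans
      (Matrix.compAlgEquiv (Fin m) (Fin k) R T).symm).trans
    ((AlgEquiv.mapMatrix (m := Fin m) α).trans
      (Matrix.compAlgEquiv (Fin m) (Fin k) R T))).trans
    (Matrix.reindexAlgEquiv T R e).symm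

namespace Stmt14Aux

/-! ### Purely ring-theoretic step -/

theorem ring_step {T H : Type*} [CommRing T] [Ring H] [Algebra T H]
    (A Γ : H ≃ₐ[T] H) :
    (∃ B : H ≃ₗ[T] H, ∀ x w y, B (x * w * y) = A x * B w * Γ y) ↔
      (∃ u : Hˣ, ∀ h, A.symm (Γ h) = ↑u * h * ↑u⁻¹) := by
  constructor
  · rintro ⟨B, hB⟩
    set b : H := B 1 with hb
    have h1 : ∀ x, B x = A x * b := fun x => by simpa using hB x 1 1
    have h2 : ∀ y, B y = b * Γ y := fun y => by simpa using hB 1 1 y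
    set w : H := B.symm 1 with hwdef
    have hw1 : A w * b = 1 := by rw [← h1]; simp [hwdef]
    have hw2 : b * Γ w = 1 := by rw [← h2]; simp [hwdef]
    have hGw : Γ w = A w := by
      calc Γ w = (A w * b) * Γ w := by rw [hw1, one_mul]
        _ = A w * (b * Γ w) := by rw [mul_assoc]
        _ = A w := by rw [hw2, mul_one]
    have key : ∀ h, A h * b = b * Γ h := fun h => (h1 h).symm.trans (h2 h)
    refine ⟨⟨A.symm (A w), A.symm b, ?_, ?_⟩, fun h => ?_⟩
    · rw [← map_mul]; simp [hw1]
    · rw [← map_mul, ← hGw, hw2]; simp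
    · show A.symm (Γ h) = A.symm (A w) * h * A.symm b
      have hh : Γ h = A w * A h * b := by
        rw [mul_assoc, key, ← mul_assoc, hw1, one_mul]
      rw [hh]
      simp [map_mul]
  · rintro ⟨u, hu⟩
    have hu' : ∀ h, Γ h = A ↑u * A h * A ↑u⁻¹ := fun h => by
      have := congrArg A (hu h)
      simpa [map_mul] using this
    set a : H := A ↑u with ha
    set a' : H := A ↑u⁻¹ with ha'
    have haa' : a * a' = 1 := by rw [ha, ha', ← map_mul]; simp
    have ha'a : a' * a = 1 := by rw [ha, ha', ← map_mul]; simp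
    refine ⟨{ toFun := fun w => a' * Γ w
              map_add' := by intro v v'; simp [mul_add]
              map_smul' := by intro t v; simp [Algebra.mul_smul_comm]
              invFun := fun w => Γ.symm (a * w)
              left_inv := fun w => by
                simp only [← mul_assoc, haa', one_mul]
                exact Γ.symm_apply_apply w
              right_inv := fun w => by
                simp only [AlgEquiv.apply_symm_apply, ← mul_assoc, ha'a, one_mul] },
          fun x w y => ?_⟩
    show a' * Γ (x * w * y) = A x * (a' * Γ w) * Γ y
    rw [map_mul, map_mul, hu' x]
    calc a' * (a * A x * a' * Γ w * Γ y)
        = (a' * a) * A x * a' * Γ w * Γ y := by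
          simp only [mul_assoc]
      _ = A x * (a' * Γ w) * Γ y := by rw [ha'a, one_mul]; simp only [mul_assoc]


/-! ### Block machinery -/

section Blocks
variable {R : Type*} [Ring R]

def blk {c c' m k m' k' : Type*} (e : c ≃ m × k) (e' : c' ≃ m' × k')
    (w : Matrix c c' R) (i : m) (j : m') : Matrix k k' R :=
  Matrix.of fun s t => w (e.symm (i, s)) (e'.symm (j, t))

omit [Ring R] in
theorem blk_ext {c c' m k m' k' : Type*} (e : c ≃ m × k) (e' : c' ≃ m' × k')
    {w w' : Matrix c c' R}
    (h : ∀ i j, blk e e' w i j = blk e e' w' i j) : w = w' := by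
  ext a b
  have := congrFun (congrFun (h (e a).1 (e' b).1) (e a).2) (e' b).2
  simpa [blk] using this

theorem blk_mul {c c' c'' m k m' k' m'' k'' : Type*}
    [Fintype c'] [Fintype m'] [Fintype k']
    (e : c ≃ m × k) (e' : c' ≃ m' × k') (e'' : c'' ≃ m'' × k'')
    (w : Matrix c c' R) (y : Matrix c' c'' R) (i : m) (j : m'') :
    blk e e'' (w * y) i j = ∑ q, blk e e' w i q * blk e' e'' y q j := by
  ext s t
  simp only [blk, Matrix.mul_apply, Matrix.of_apply, Matrix.sum_apply]
  rw [← Equiv.sum_comp e'.symm (fun b => w (e.symm (i, s)) b * y b (e''.symm (j, t)))]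
  rw [Fintype.sum_prod_type]

end Blocks

section Main

variable (T : Type*) {R : Type*} [CommRing T] [Ring R] [Algebra T R]

theorem blk_blockInducedAuto {c m k : ℕ} (e : Fin c ≃ Fin m × Fin k)
    (α : Matrix (Fin k) (Fin k) R ≃ₐ[T] Matrix (Fin k) (Fin k) R)
    (x : Matrix (Fin c) (Fin c) R) (i p : Fin m) :
    blk e e (blockInducedAuto T R e α x) i p = α (blk e e x i p) := by
  ext s t
  simp only [blockInducedAuto, blk, AlgEquiv.trans_apply, Matrix.reindexAlgEquiv_apply,
    Matrix.reindexAlgEquiv_symm, Matrix.reindex_apply, AlgEquiv.mapMatrix_apply,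
    Matrix.compAlgEquiv_apply, Matrix.submatrix_apply,
    Equiv.symm_symm, Equiv.apply_symm_apply, Matrix.map_apply, Matrix.of_apply]
  congr 1

variable {c l' k' k l : ℕ}
  (e₁ : Fin c ≃ Fin l' × Fin k) (e₂ : Fin c ≃ Fin k' × Fin l)

/-- apply a map blockwise -/
def blkMap (φ : Matrix (Fin k) (Fin l) R → Matrix (Fin k) (Fin l) R)
    (w : Matrix (Fin c) (Fin c) R) : Matrix (Fin c) (Fin c) R :=
  Matrix.of fun a b => φ (blk e₁ e₂ w (e₁ a).1 (e₂ b).1) (e₁ a).2 (e₂ b).2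

theorem blk_blkMap (φ : Matrix (Fin k) (Fin l) R → Matrix (Fin k) (Fin l) R)
    (w : Matrix (Fin c) (Fin c) R) (i : Fin l') (j : Fin k') :
    blk e₁ e₂ (blkMap e₁ e₂ φ w) i j = φ (blk e₁ e₂ w i j) := by
  ext s t
  simp [blkMap, blk]

theorem blk_add' {c c' m k m' k' : Type*} (e : c ≃ m × k) (e' : c' ≃ m' × k')
    (w w' : Matrix c c' R) (i : m) (j : m') :
    blk e e' (w + w') i j = blk e e' w i j + blk e e' w' i j := rfl

theorem blk_smul' {c c' m k m' k' : Type*} (e : c ≃ m × k) (e' : c' ≃ m' × k')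
    (t : T) (w : Matrix c c' R) (i : m) (j : m') :
    blk e e' (t • w) i j = t • blk e e' w i j := rfl

/-- the twisted linear automorphism of `M(c,R)` induced blockwise by `β` -/
def Bof (β : Matrix (Fin k) (Fin l) R ≃ₗ[T] Matrix (Fin k) (Fin l) R) :
    Matrix (Fin c) (Fin c) R ≃ₗ[T] Matrix (Fin c) (Fin c) R where
  toFun := blkMap e₁ e₂ β
  invFun := blkMap e₁ e₂ β.symm
  map_add' w w' := by
    apply blk_ext e₁ e₂
    intro i j
    simp [blk_blkMap, blk_add']
  map_smul' t w := by
    apply blk_ext e₁ e₂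
    intro i j
    simp [blk_blkMap, blk_smul']
  left_inv w := by
    apply blk_ext e₁ e₂
    intro i j
    simp [blk_blkMap]
  right_inv w := by
    apply blk_ext e₁ e₂
    intro i j
    simp [blk_blkMap]

theorem blk_Bof (β : Matrix (Fin k) (Fin l) R ≃ₗ[T] Matrix (Fin k) (Fin l) R)
    (w : Matrix (Fin c) (Fin c) R) (i : Fin l') (j : Fin k') :
    blk e₁ e₂ (Bof T e₁ e₂ β w) i j = β (blk e₁ e₂ w i j) :=
  blk_blkMap e₁ e₂ β w i j


section Emb
variable (i₀ : Fin l') (j₀ : Fin k')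

def embV (v : Matrix (Fin k) (Fin l) R) : Matrix (Fin c) (Fin c) R :=
  Matrix.of fun a b =>
    if (e₁ a).1 = i₀ ∧ (e₂ b).1 = j₀ then v (e₁ a).2 (e₂ b).2 else 0

def embP (x : Matrix (Fin k) (Fin k) R) : Matrix (Fin c) (Fin c) R :=
  Matrix.of fun a b =>
    if (e₁ a).1 = i₀ ∧ (e₁ b).1 = i₀ then x (e₁ a).2 (e₁ b).2 else 0

def embQ (y : Matrix (Fin l) (Fin l) R) : Matrix (Fin c) (Fin c) R :=
  Matrix.of fun a b =>
    if (e₂ a).1 = j₀ ∧ (e₂ b).1 = j₀ then y (e₂ a).2 (e₂ b).2 else 0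

theorem blk_embV (v : Matrix (Fin k) (Fin l) R) (i : Fin l') (j : Fin k') :
    blk e₁ e₂ (embV e₁ e₂ i₀ j₀ v) i j = if i = i₀ ∧ j = j₀ then v else 0 := by
  ext s t
  by_cases h1 : i = i₀ <;> by_cases h2 : j = j₀ <;> simp [blk, embV, h1, h2]

theorem blk_embP (x : Matrix (Fin k) (Fin k) R) (i p : Fin l') :
    blk e₁ e₁ (embP e₁ i₀ x) i p = if i = i₀ ∧ p = i₀ then x else 0 := by
  ext s t
  by_cases h1 : i = i₀ <;> by_cases h2 : p = i₀ <;> simp [blk, embP, h1, h2]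

theorem blk_embQ (y : Matrix (Fin l) (Fin l) R) (q j : Fin k') :
    blk e₂ e₂ (embQ e₂ j₀ y) q j = if q = j₀ ∧ j = j₀ then y else 0 := by
  ext s t
  by_cases h1 : q = j₀ <;> by_cases h2 : j = j₀ <;> simp [blk, embQ, h1, h2]

theorem embP_mul_embV (x : Matrix (Fin k) (Fin k) R) (v : Matrix (Fin k) (Fin l) R) :
    embP e₁ i₀ x * embV e₁ e₂ i₀ j₀ v = embV e₁ e₂ i₀ j₀ (x * v) := by
  apply blk_ext e₁ e₂
  intro i j
  rw [blk_mul e₁ e₁ e₂, blk_embV, Finset.sum_eq_single i₀]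
  · rw [blk_embP, blk_embV]
    by_cases h1 : i = i₀ <;> by_cases h2 : j = j₀ <;> simp [h1, h2]
  · intro p _ hp
    rw [blk_embP, blk_embV]
    simp [hp]
  · simp

theorem embV_mul_embQ (v : Matrix (Fin k) (Fin l) R) (y : Matrix (Fin l) (Fin l) R) :
    embV e₁ e₂ i₀ j₀ v * embQ e₂ j₀ y = embV e₁ e₂ i₀ j₀ (v * y) := by
  apply blk_ext e₁ e₂
  intro i j
  rw [blk_mul e₁ e₂ e₂, blk_embV, Finset.sum_eq_single j₀]
  · rw [blk_embQ, blk_embV]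
    by_cases h1 : i = i₀ <;> by_cases h2 : j = j₀ <;> simp [h1, h2]
  · intro q _ hq
    rw [blk_embQ, blk_embV]
    simp [hq]
  · simp

theorem collapse (w : Matrix (Fin c) (Fin c) R) :
    embP e₁ i₀ 1 * w * embQ e₂ j₀ 1 = embV e₁ e₂ i₀ j₀ (blk e₁ e₂ w i₀ j₀) := by
  apply blk_ext e₁ e₂
  intro i j
  have h1 : ∀ q, blk e₁ e₂ (embP e₁ i₀ 1 * w) i q =
      if i = i₀ then blk e₁ e₂ w i₀ q else 0 := by
    intro q
    rw [blk_mul e₁ e₁ e₂, Finset.sum_eq_single i₀]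
    · rw [blk_embP]
      by_cases h : i = i₀ <;> simp [h]
    · intro p _ hp
      rw [blk_embP]
      simp [hp]
    · simp
  rw [blk_mul e₁ e₂ e₂, blk_embV, Finset.sum_eq_single j₀]
  · rw [h1, blk_embQ]
    by_cases ha : i = i₀ <;> by_cases hb : j = j₀ <;> simp [ha, hb]
  · intro q _ hq
    rw [blk_embQ]
    simp [hq]
  · simp

theorem blk_triple (x : Matrix (Fin k) (Fin k) R) (w : Matrix (Fin c) (Fin c) R)
    (y : Matrix (Fin l) (Fin l) R) :
    blk e₁ e₂ (embP e₁ i₀ x * w * embQ e₂ j₀ y) i₀ j₀ =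
      x * blk e₁ e₂ w i₀ j₀ * y := by
  have h1 : ∀ q, blk e₁ e₂ (embP e₁ i₀ x * w) i₀ q = x * blk e₁ e₂ w i₀ q := by
    intro q
    rw [blk_mul e₁ e₁ e₂, Finset.sum_eq_single i₀]
    · rw [blk_embP]; simp
    · intro p _ hp
      rw [blk_embP]
      simp [hp]
    · simp
  rw [blk_mul e₁ e₂ e₂, Finset.sum_eq_single j₀]
  · rw [h1, blk_embQ]; simp
  · intro q _ hq
    rw [blk_embQ]
    simp [hq]
  · simp

theorem auto_embP (α : Matrix (Fin k) (Fin k) R ≃ₐ[T] Matrix (Fin k) (Fin k) R)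
    (x : Matrix (Fin k) (Fin k) R) :
    blockInducedAuto T R e₁ α (embP e₁ i₀ x) = embP e₁ i₀ (α x) := by
  apply blk_ext e₁ e₁
  intro i p
  rw [blk_blockInducedAuto, blk_embP, blk_embP]
  by_cases h1 : i = i₀ <;> by_cases h2 : p = i₀ <;> simp [h1, h2]

theorem auto_embQ (γ : Matrix (Fin l) (Fin l) R ≃ₐ[T] Matrix (Fin l) (Fin l) R)
    (y : Matrix (Fin l) (Fin l) R) :
    blockInducedAuto T R e₂ γ (embQ e₂ j₀ y) = embQ e₂ j₀ (γ y) := by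
  apply blk_ext e₂ e₂
  intro q j
  rw [blk_blockInducedAuto, blk_embQ, blk_embQ]
  by_cases h1 : q = j₀ <;> by_cases h2 : j = j₀ <;> simp [h1, h2]

theorem embV_add (v v' : Matrix (Fin k) (Fin l) R) :
    embV e₁ e₂ i₀ j₀ (v + v') = embV e₁ e₂ i₀ j₀ v + embV e₁ e₂ i₀ j₀ v' := by
  ext a b
  by_cases h : (e₁ a).1 = i₀ ∧ (e₂ b).1 = j₀ <;> simp [embV, h]

theorem embV_smul (t : T) (v : Matrix (Fin k) (Fin l) R) :
    embV e₁ e₂ i₀ j₀ (t • v) = t • embV e₁ e₂ i₀ j₀ v := by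
  ext a b
  by_cases h : (e₁ a).1 = i₀ ∧ (e₂ b).1 = j₀ <;> simp [embV, h]

theorem B_iff (hl'0 : 0 < l') (hk'0 : 0 < k')
    (α : Matrix (Fin k) (Fin k) R ≃ₐ[T] Matrix (Fin k) (Fin k) R)
    (γ : Matrix (Fin l) (Fin l) R ≃ₐ[T] Matrix (Fin l) (Fin l) R) :
    (∃ β : Matrix (Fin k) (Fin l) R ≃ₗ[T] Matrix (Fin k) (Fin l) R,
        ∀ (x : Matrix (Fin k) (Fin k) R) (v : Matrix (Fin k) (Fin l) R)
          (y : Matrix (Fin l) (Fin l) R), β (x * v * y) = α x * β v * γ y) ↔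
      (∃ B : Matrix (Fin c) (Fin c) R ≃ₗ[T] Matrix (Fin c) (Fin c) R,
        ∀ x w y, B (x * w * y) =
          blockInducedAuto T R e₁ α x * B w * blockInducedAuto T R e₂ γ y) := by
  constructor
  · rintro ⟨β, hβ⟩
    refine ⟨Bof T e₁ e₂ β, fun x w y => ?_⟩
    apply blk_ext e₁ e₂
    intro i j
    rw [blk_Bof, blk_mul e₁ e₂ e₂ (x * w) y,
      blk_mul e₁ e₂ e₂ _ (blockInducedAuto T R e₂ γ y)]
    simp only [blk_mul e₁ e₁ e₂, blk_blockInducedAuto, blk_Bof, Matrix.sum_mul, map_sum]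
    refine Finset.sum_congr rfl fun q _ => Finset.sum_congr rfl fun p _ => ?_
    exact hβ _ _ _
  · rintro ⟨B, hB⟩
    set A₁ := blockInducedAuto T R e₁ α with hA₁
    set A₂ := blockInducedAuto T R e₂ γ with hA₂
    have hB' : ∀ x w y, B.symm (x * w * y) = A₁.symm x * B.symm w * A₂.symm y := by
      intro x w y
      apply B.injective
      rw [hB]
      simp
    set i₀ : Fin l' := ⟨0, hl'0⟩
    set j₀ : Fin k' := ⟨0, hk'0⟩
    have hfP : A₁ (embP e₁ i₀ 1) = embP e₁ i₀ 1 := by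
      rw [hA₁, auto_embP, map_one]
    have hfQ : A₂ (embQ e₂ j₀ 1) = embQ e₂ j₀ 1 := by
      rw [hA₂, auto_embQ, map_one]
    have hfP' : A₁.symm (embP e₁ i₀ 1) = embP e₁ i₀ 1 := by
      conv_lhs => rw [← hfP]
      exact A₁.symm_apply_apply _
    have hfQ' : A₂.symm (embQ e₂ j₀ 1) = embQ e₂ j₀ 1 := by
      conv_lhs => rw [← hfQ]
      exact A₂.symm_apply_apply _
    have hBemb : ∀ v, embV e₁ e₂ i₀ j₀ (blk e₁ e₂
        (B (embV e₁ e₂ i₀ j₀ v)) i₀ j₀) = B (embV e₁ e₂ i₀ j₀ v) := by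
      intro v
      rw [← collapse e₁ e₂ i₀ j₀]
      calc embP e₁ i₀ 1 * B (embV e₁ e₂ i₀ j₀ v) * embQ e₂ j₀ 1
          = A₁ (embP e₁ i₀ 1) * B (embV e₁ e₂ i₀ j₀ v) * A₂ (embQ e₂ j₀ 1) := by
            rw [hfP, hfQ]
        _ = B (embP e₁ i₀ 1 * embV e₁ e₂ i₀ j₀ v * embQ e₂ j₀ 1) := (hB _ _ _).symm
        _ = B (embV e₁ e₂ i₀ j₀ v) := by
            rw [embP_mul_embV, Matrix.one_mul, embV_mul_embQ, Matrix.mul_one]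
    have hBemb' : ∀ v, embV e₁ e₂ i₀ j₀ (blk e₁ e₂
        (B.symm (embV e₁ e₂ i₀ j₀ v)) i₀ j₀) = B.symm (embV e₁ e₂ i₀ j₀ v) := by
      intro v
      rw [← collapse e₁ e₂ i₀ j₀]
      calc embP e₁ i₀ 1 * B.symm (embV e₁ e₂ i₀ j₀ v) * embQ e₂ j₀ 1
          = A₁.symm (embP e₁ i₀ 1) * B.symm (embV e₁ e₂ i₀ j₀ v) *
              A₂.symm (embQ e₂ j₀ 1) := by rw [hfP', hfQ']
        _ = B.symm (embP e₁ i₀ 1 * embV e₁ e₂ i₀ j₀ v * embQ e₂ j₀ 1) :=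
            (hB' _ _ _).symm
        _ = B.symm (embV e₁ e₂ i₀ j₀ v) := by
            rw [embP_mul_embV, Matrix.one_mul, embV_mul_embQ, Matrix.mul_one]
    refine ⟨{ toFun := fun v => blk e₁ e₂ (B (embV e₁ e₂ i₀ j₀ v)) i₀ j₀
              invFun := fun v => blk e₁ e₂ (B.symm (embV e₁ e₂ i₀ j₀ v)) i₀ j₀
              map_add' := fun v v' => by
                simp only [embV_add, map_add, blk_add']
              map_smul' := fun t v => by
                simp only [embV_smul, map_smul, blk_smul', RingHom.id_apply]
              left_inv := fun v => by
                show blk e₁ e₂ (B.symm (embV e₁ e₂ i₀ j₀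
                  (blk e₁ e₂ (B (embV e₁ e₂ i₀ j₀ v)) i₀ j₀))) i₀ j₀ = v
                rw [hBemb v, B.symm_apply_apply, blk_embV]
                simp
              right_inv := fun v => by
                show blk e₁ e₂ (B (embV e₁ e₂ i₀ j₀
                  (blk e₁ e₂ (B.symm (embV e₁ e₂ i₀ j₀ v)) i₀ j₀))) i₀ j₀ = v
                rw [hBemb' v, B.apply_symm_apply, blk_embV]
                simp },
          fun x v y => ?_⟩
    show blk e₁ e₂ (B (embV e₁ e₂ i₀ j₀ (x * v * y))) i₀ j₀ =
      α x * blk e₁ e₂ (B (embV e₁ e₂ i₀ j₀ v)) i₀ j₀ * γ y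
    rw [← embV_mul_embQ, ← embP_mul_embV, hB, hA₁, hA₂, auto_embP, auto_embQ,
      blk_triple]

end Emb

end Main

end Stmt14Aux

/-- Let `P = M(k,R)`, `Q = M(ℓ,R)`, `H = M(c,R)` with `c = lcm(k,ℓ)`, `ℓ' = c/k`,
`k' = c/ℓ`, and let `V` be the `P`-`Q`-bimodule of `k × ℓ` matrices over `R`. For
`T`-algebra automorphisms `α` of `P` and `γ` of `Q` (inducing automorphisms `ᾱ`, `γ̄`
of `H` via fixed block identifications), there exists an isomorphism of `P`-`Q`-bimodules
`V → _α V _γ` if and only if `ᾱ⁻¹ ∘ γ̄` is an inner automorphism of `H`. -/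
theorem stmt14 (T R : Type*) [CommRing T] [Ring R] [Algebra T R]
    (k l c k' l' : ℕ) (hk : 0 < k) (hl : 0 < l) (hc : c = Nat.lcm k l)
    (hl' : l' = c / k) (hk' : k' = c / l)
    (e₁ : Fin c ≃ Fin l' × Fin k) (e₂ : Fin c ≃ Fin k' × Fin l)
    (α : Matrix (Fin k) (Fin k) R ≃ₐ[T] Matrix (Fin k) (Fin k) R)
    (γ : Matrix (Fin l) (Fin l) R ≃ₐ[T] Matrix (Fin l) (Fin l) R) :
    (∃ β : Matrix (Fin k) (Fin l) R ≃ₗ[T] Matrix (Fin k) (Fin l) R,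
        ∀ (x : Matrix (Fin k) (Fin k) R) (v : Matrix (Fin k) (Fin l) R)
          (y : Matrix (Fin l) (Fin l) R), β (x * v * y) = α x * β v * γ y) ↔
    (∃ u : (Matrix (Fin c) (Fin c) R)ˣ,
        ∀ h : Matrix (Fin c) (Fin c) R,
          (blockInducedAuto T R e₁ α).symm (blockInducedAuto T R e₂ γ h) =
            Units.val u * h * Units.val u⁻¹) := by
  have hc0 : 0 < c := by
    rw [hc]
    exact Nat.pos_of_ne_zero (Nat.lcm_ne_zero hk.ne' hl.ne')
  have hl'0 : 0 < l' := by
    rw [hl']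
    exact Nat.div_pos (Nat.le_of_dvd hc0 (hc ▸ Nat.dvd_lcm_left k l)) hk
  have hk'0 : 0 < k' := by
    rw [hk']
    exact Nat.div_pos (Nat.le_of_dvd hc0 (hc ▸ Nat.dvd_lcm_right k l)) hl
  rw [Stmt14Aux.B_iff T e₁ e₂ hl'0 hk'0 α γ]
  exact Stmt14Aux.ring_step (blockInducedAuto T R e₁ α) (blockInducedAuto T R e₂ γ)
end

section
/- Let T be a commutative ring, let R be a T-algebra whose underlying ring is local, let n ≥ 1, and let K = M(n,R) be the full n×n matrix algebra over R. Then every T-algebra automorphism φ of K is a product of an inner automorphism and a ring automorphism: there exist an invertible matrix u ∈ K and a T-algebra automorphism α of R such that φ(A) = u · ᾱ(A) · u⁻¹ for all A ∈ K, where ᾱ(A) is obtained by applying α to every entry of A. -/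
/-!
The matrices `f i j = φ (single i j 1)` form a full system of matrix units. Since
`1 = ∑ i, f i p * f p p * f p i` and the nonunits of the local ring `R` are closed under sums and
two-sided multiples, some entry `c = f p p k l` is a unit. The matrices
`t = ∑ i, f i p * single l i 1` and `s = ∑ i, single i k 1 * f p i` intertwine the two systems of
matrix units and satisfy `s * t = scalar c`, so `t` has a left inverse `s'`. The idempotent
`t * s'` commutes with every `f i j`, so `φ⁻¹ (t * s')` is a scalar idempotent, which is `0` or `1`
because `R` is local; it is not `0`, so `t` is invertible. Conjugating `φ` by `t⁻¹` gives an
automorphism fixing every `single i j 1`; it maps scalar matrices to scalar matrices, and the map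
it induces on `R` is the automorphism `α`.
-/

section Idempotent

variable {M : Type*}

theorem isIdempotentElem_mul_of_mul_eq_one [Monoid M] {a b : M} (h : a * b = 1) :
    IsIdempotentElem (b * a) := by
  rw [IsIdempotentElem, mul_assoc, ← mul_assoc a, h, one_mul]

theorem mul_eq_one_symm_of_eq_zero_or_eq_one [MonoidWithZero M] [Nontrivial M] {a b : M}
    (h : a * b = 1) (hba : b * a = 0 ∨ b * a = 1) : b * a = 1 :=
  hba.resolve_left fun h0 => one_ne_zero <|
    calc (1 : M) = a * (b * a) * b := by rw [← mul_assoc, h, one_mul, h]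
      _ = 0 := by rw [h0, mul_zero, zero_mul]

end Idempotent

section LocalRing

variable {R : Type*} [Ring R] [IsLocalRing R]

theorem IsLocalRing.isIdempotentElem_iff {e : R} : IsIdempotentElem e ↔ e = 0 ∨ e = 1 := by
  refine ⟨fun he => ?_, by rintro (rfl | rfl); exacts [.zero, .one]⟩
  rcases IsLocalRing.isUnit_or_isUnit_of_add_one (add_sub_cancel e 1) with h | h
  · exact Or.inr ((IsIdempotentElem.iff_eq_one_of_isUnit h).mp he)
  · exact Or.inl (by simpa using (IsIdempotentElem.iff_eq_one_of_isUnit h).mp he.one_sub)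

instance IsLocalRing.toIsDedekindFiniteMonoid : IsDedekindFiniteMonoid R where
  mul_eq_one_symm h := mul_eq_one_symm_of_eq_zero_or_eq_one h <|
    IsLocalRing.isIdempotentElem_iff.mp (isIdempotentElem_mul_of_mul_eq_one h)

end LocalRing

namespace Matrix

variable {R n : Type*} [Ring R] [Fintype n] [DecidableEq n]

theorem single_eq_scalar_mul_single (i j : n) (r : R) :
    single i j r = scalar n r * single i j 1 := by
  ext
  simp [single_apply]

theorem commute_single_scalar (i j : n) (r : R) : Commute (single i j 1) (scalar n r) :=
  mem_range_scalar_iff_commute_single'.mp ⟨r, rfl⟩ i j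

theorem single_one_mul_single_one (i j j' l : n) :
    (single i j 1 : Matrix n n R) * single j' l 1 = if j = j' then single i l 1 else 0 := by
  split_ifs with h
  · rw [h, single_mul_single_same, one_mul]
  · exact single_mul_single_of_ne _ _ _ _ h _

theorem sum_single_mul_mul_single (M : Matrix n n R) (k l : n) :
    ∑ i, single i k 1 * M * single l i 1 = scalar n (M k l) := by
  simp [sum_single_eq_diagonal]

theorem exists_isUnit_apply_of_sum_mul_mul_eq_one [IsLocalRing R] [Nonempty n] {ι : Type*}
    [Fintype ι] {X Y : ι → Matrix n n R} {M : Matrix n n R} (h : ∑ i, X i * M * Y i = 1) :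
    ∃ k l, IsUnit (M k l) := by
  obtain ⟨a⟩ := ‹Nonempty n›
  have hunit : IsUnit ((∑ i, X i * M * Y i) a a) := by
    rw [h, one_apply_eq]
    exact isUnit_one
  simp only [sum_apply, mul_apply, Finset.sum_mul] at hunit
  obtain ⟨i, -, hi⟩ := IsLocalRing.exists_of_isUnit_sum hunit
  obtain ⟨b, -, hb⟩ := IsLocalRing.exists_of_isUnit_sum hi
  obtain ⟨c, -, hc⟩ := IsLocalRing.exists_of_isUnit_sum hb
  exact ⟨c, b, isUnit_of_mul_isUnit_right (isUnit_of_mul_isUnit_left hc)⟩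

end Matrix

namespace AlgEquiv

open Matrix

variable {T R n : Type*} [CommRing T] [Ring R] [Algebra T R] [Fintype n] [DecidableEq n]

theorem map_scalar_mem_range_scalar (ψ : Matrix n n R ≃ₐ[T] Matrix n n R)
    (hψ : ∀ i j, ψ (single i j 1) = single i j 1) (r : R) :
    ψ (scalar n r) ∈ Set.range (scalar n) :=
  mem_range_scalar_iff_commute_single'.mpr fun i j => by
    simpa only [hψ] using (commute_single_scalar i j r).map ψ

theorem exists_eq_map_of_map_single [Nonempty n] (ψ : Matrix n n R ≃ₐ[T] Matrix n n R)
    (hψ : ∀ i j, ψ (single i j 1) = single i j 1) :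
    ∃ α : R ≃ₐ[T] R, ∀ A, ψ A = A.map α := by
  have hψ_symm : ∀ i j, ψ.symm (single i j 1) = single i j 1 := fun i j =>
    ψ.symm_apply_eq.mpr (hψ i j).symm
  choose α hα using ψ.map_scalar_mem_range_scalar hψ
  choose β hβ using ψ.symm.map_scalar_mem_range_scalar hψ_symm
  let α' : R ≃ₐ[T] R :=
    { toFun := α
      invFun := β
      left_inv := fun r => scalar_inj.mp <| by rw [hβ, hα, ψ.symm_apply_apply]
      right_inv := fun r => scalar_inj.mp <| by rw [hα, hβ, ψ.apply_symm_apply]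
      map_mul' := fun r s => scalar_inj.mp <| by
        rw [hα, map_mul (scalar n) r, map_mul ψ, map_mul (scalar n), hα, hα]
      map_add' := fun r s => scalar_inj.mp <| by
        rw [hα, map_add (scalar n) r, map_add ψ, map_add (scalar n), hα, hα]
      commutes' := fun c => scalar_inj.mp <| by
        rw [hα, ← scalarAlgHom_apply n T, AlgHom.commutes, AlgEquiv.commutes] }
  have hsingle : ∀ i j r, ψ (single i j r) = single i j (α' r) := fun i j r => by
    rw [single_eq_scalar_mul_single, map_mul, hψ, ← hα, ← single_eq_scalar_mul_single]
    rfl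
  refine ⟨α', fun A => ?_⟩
  conv_lhs => rw [matrix_eq_sum_single A]
  simp only [map_sum, hsingle]
  exact (matrix_eq_sum_single (A.map α')).symm

theorem exists_eq_conj_map_of_map_single [Nonempty n] (φ : Matrix n n R ≃ₐ[T] Matrix n n R)
    (u : (Matrix n n R)ˣ)
    (hu : ∀ i j, φ (single i j 1) = Units.val u * single i j 1 * Units.val u⁻¹) :
    ∃ α : R ≃ₐ[T] R, ∀ A, φ A = Units.val u * A.map α * Units.val u⁻¹ := by
  let ψ := φ.trans (MulSemiringAction.toAlgEquiv T _ (ConjAct.toConjAct u⁻¹))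
  have hψ : ∀ A, ψ A = Units.val u⁻¹ * φ A * Units.val u := by
    simp [ψ, ConjAct.units_smul_def]
  obtain ⟨α, hα⟩ := ψ.exists_eq_map_of_map_single fun i j => by
    rw [hψ, hu]
    simp [mul_assoc]
  refine ⟨α, fun A => ?_⟩
  rw [← hα, hψ]
  simp [mul_assoc]

variable (φ : Matrix n n R ≃ₐ[T] Matrix n n R)

theorem map_single_mul_map_single (i j j' l : n) :
    φ (single i j 1) * φ (single j' l 1) = if j = j' then φ (single i l 1) else 0 := by
  rw [← map_mul, single_one_mul_single_one, apply_ite φ, map_zero]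

theorem exists_intertwiners (p k l : n) :
    ∃ s t : Matrix n n R, (∀ i j, φ (single i j 1) * t = t * single i j 1) ∧
      (∀ i j, single i j 1 * s = s * φ (single i j 1)) ∧
      s * t = scalar n (φ (single p p 1) k l) := by
  refine ⟨∑ i, single i k 1 * φ (single p i 1), ∑ i, φ (single i p 1) * single l i 1,
    fun i j => ?_, fun i j => ?_, ?_⟩
  · simp only [Finset.mul_sum, Finset.sum_mul, ← mul_assoc, map_single_mul_map_single]
    simp only [mul_assoc, single_one_mul_single_one, ite_mul, mul_ite, zero_mul, mul_zero,
      Finset.sum_ite_eq, Finset.sum_ite_eq', Finset.mem_univ, if_true]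
  · simp only [Finset.mul_sum, Finset.sum_mul, ← mul_assoc, single_one_mul_single_one]
    simp only [mul_assoc, map_single_mul_map_single, ite_mul, mul_ite, zero_mul, mul_zero,
      Finset.sum_ite_eq, Finset.sum_ite_eq', Finset.mem_univ, if_true]
  · simp only [Finset.mul_sum, Finset.sum_mul, ← mul_assoc]
    simp only [mul_assoc (single _ k 1 : Matrix n n R), map_single_mul_map_single, mul_ite,
      ite_mul, zero_mul, mul_zero, Finset.sum_ite_eq', Finset.mem_univ, if_true]
    simp only [← mul_assoc]
    exact sum_single_mul_mul_single _ k l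

variable [IsLocalRing R] [Nonempty n]

theorem eq_zero_or_eq_one_of_commute_map_single {e : Matrix n n R} (he : IsIdempotentElem e)
    (hc : ∀ i j, Commute (φ (single i j 1)) e) : e = 0 ∨ e = 1 := by
  obtain ⟨d, hd⟩ : φ.symm e ∈ Set.range (scalar n) :=
    mem_range_scalar_iff_commute_single'.mpr fun i j => by
      simpa only [symm_apply_apply] using (hc i j).map φ.symm
  have he_eq : e = φ (scalar n d) := by rw [hd, φ.apply_symm_apply]
  have hd_idem : IsIdempotentElem d :=
    (scalar_inj (n := n)).mp <| by rw [map_mul, hd, ← map_mul, he.eq]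
  rcases IsLocalRing.isIdempotentElem_iff.mp hd_idem with rfl | rfl
  · exact Or.inl (by rw [he_eq, map_zero, map_zero])
  · exact Or.inr (by rw [he_eq, map_one, map_one])

theorem exists_units_map_single_eq_conj :
    ∃ u : (Matrix n n R)ˣ,
      ∀ i j, φ (single i j 1) = Units.val u * single i j 1 * Units.val u⁻¹ := by
  obtain ⟨p⟩ := ‹Nonempty n›
  obtain ⟨k, l, c, hc⟩ : ∃ k l, IsUnit (φ (single p p 1) k l) :=
    exists_isUnit_apply_of_sum_mul_mul_eq_one (X := fun i => φ (single i p 1))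
      (Y := fun i => φ (single p i 1)) <| by
        simp only [map_single_mul_map_single, if_pos, ← map_sum, sum_single_one, map_one]
  obtain ⟨s, t, hft, hsf, hst⟩ := φ.exists_intertwiners p k l
  set s' := scalar n (↑c⁻¹ : R) * s with hs'
  have hst' : s' * t = 1 := by rw [hs', mul_assoc, hst, ← hc, ← map_mul, Units.inv_mul, map_one]
  have hts' : t * s' = 1 := by
    refine mul_eq_one_symm_of_eq_zero_or_eq_one hst' <|
      φ.eq_zero_or_eq_one_of_commute_map_single (isIdempotentElem_mul_of_mul_eq_one hst')
        fun i j => ?_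
    calc φ (single i j 1) * (t * s') = t * (single i j 1 * scalar n (↑c⁻¹ : R) * s) := by
          rw [← mul_assoc, hft]; simp only [s', mul_assoc]
      _ = t * (scalar n (↑c⁻¹ : R) * (single i j 1 * s)) := by
          rw [(commute_single_scalar i j _).eq]; simp only [mul_assoc]
      _ = t * s' * φ (single i j 1) := by rw [hsf]; simp only [s', mul_assoc]
  refine ⟨⟨t, s', hts', hst'⟩, fun i j => ?_⟩
  calc φ (single i j 1) = φ (single i j 1) * (t * s') := by rw [hts', mul_one]
    _ = t * single i j 1 * s' := by rw [← mul_assoc, hft]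

end AlgEquiv

/-- If `R` is a `T`-algebra whose underlying ring is local, every `T`-algebra automorphism
of the full matrix algebra `M(n,R)` is a product of an inner automorphism and a ring
automorphism (one induced entrywise by an automorphism of `R`). -/
theorem stmt15 (T R : Type*) [CommRing T] [Ring R] [Algebra T R] [IsLocalRing R]
    (n : ℕ) (hn : 1 ≤ n)
    (φ : Matrix (Fin n) (Fin n) R ≃ₐ[T] Matrix (Fin n) (Fin n) R) :
    ∃ (u : (Matrix (Fin n) (Fin n) R)ˣ) (α : R ≃ₐ[T] R),
      ∀ A : Matrix (Fin n) (Fin n) R, φ A = Units.val u * A.map ⇑α * Units.val u⁻¹ := by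
  have : Nonempty (Fin n) := ⟨⟨0, hn⟩⟩
  obtain ⟨u, hu⟩ := φ.exists_units_map_single_eq_conj
  obtain ⟨α, hα⟩ := φ.exists_eq_conj_map_of_map_single u hu
  exact ⟨u, α, hα⟩
end
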